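/- arXiv:1506.02234 — 7 statements merged into one kernel-verified Lean document; each statement's English description precedes it below -/
import Mathlib

section
/- Let p be a prime, let s > 1 be an integer with deg_p(s−1) = ℓ > 1, and let x > 0 be an integer with deg_p(x) = u > 0. If p ≠ 2 then [x]_s ≡ x (mod p^{ℓ+u}), and if p = 2 then [x]_s ≡ (1 + 2^{ℓ−1})·x (mod 2^{ℓ+u}). -/
/-!
Put `a = s - 1`, so that `[x]_s * a = s^x - 1 = ∑_{k ≥ 1} C(x,k) a^k`. Since `x ∣ C(x,k) * k`
and `deg_p k ≤ (k - 2) ℓ`, every term with `k ≥ 3`, and also the term `k = 2` when `p` is odd,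
is divisible by `p^(u + 2ℓ)`; for `p = 2` the term `C(x,2) a²` is `2^(ℓ-1) x a` modulo
`2^(u + 2ℓ)`. Dividing by `a`, whose valuation is exactly `ℓ`, gives the congruences
modulo `p^(ℓ + u)`.
-/

/-- The geometric sum `[k]_s = 1 + s + s^2 + ⋯ + s^(k-1)`, with `[0]_s = 0`. -/
def geomS (s : ℤ) (k : ℕ) : ℤ := ∑ i ∈ Finset.range k, s ^ i

theorem pow_dvd_of_pow_add_dvd_mul {M : Type*} [CommMonoidWithZero M] [IsCancelMulZero M]
    {q a b : M} (hq : Prime q) {e n : ℕ} (ha : ¬ q ^ (e + 1) ∣ a) (h : q ^ (n + e) ∣ a * b) :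
    q ^ n ∣ b := by
  induction e generalizing a with
  | zero => exact hq.pow_dvd_of_dvd_mul_left n (by simpa using ha) h
  | succ e ih =>
    by_cases hqa : q ∣ a
    · obtain ⟨a, rfl⟩ := hqa
      refine ih (a := a) (fun h' => ha ?_) ?_
      · rw [pow_succ']; exact mul_dvd_mul_left q h'
      · rwa [← add_assoc, pow_succ', mul_assoc, mul_dvd_mul_iff_left hq.ne_zero] at h
    · exact hq.pow_dvd_of_dvd_mul_left n hqa (dvd_trans (pow_dvd_pow q (by omega)) h)

theorem Nat.dvd_choose_mul (n k : ℕ) : n ∣ n.choose k * k := by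
  rcases k with _ | k
  · simp
  rcases n with _ | n
  · simp
  exact ⟨_, (add_one_mul_choose_eq n k).symm⟩

theorem Nat.cast_choose_two_mul_two {R : Type*} [CommRing R] (n : ℕ) :
    (n.choose 2 : R) * 2 = n * (n - 1) := by
  rcases n with _ | n
  · simp
  · have : (n + 1).choose 2 * 2 = (n + 1) * n := by simpa using (add_one_mul_choose_eq n 1).symm
    rw [Nat.cast_add_one, add_sub_cancel_right]
    exact_mod_cast congrArg (Nat.cast : ℕ → R) this

theorem add_one_pow_eq_sum_Ico_three {R : Type*} [CommRing R] (a : R) (n : ℕ) :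
    (a + 1) ^ n = 1 + n * a + n.choose 2 * a ^ 2 +
      ∑ k ∈ Finset.Ico 3 (n + 1), n.choose k * a ^ k := by
  rcases n with _ | _ | n
  · simp
  · simp [add_comm]
  rw [add_pow, Finset.range_eq_Ico, Finset.sum_eq_sum_Ico_succ_bot (by omega),
    Finset.sum_eq_sum_Ico_succ_bot (by omega), Finset.sum_eq_sum_Ico_succ_bot (by omega)]
  simp only [pow_zero, pow_one, one_pow, mul_one, one_mul, zero_add, tsub_zero,
    add_tsub_cancel_right, Nat.choose_zero_right, Nat.choose_one_right, Nat.cast_one, Nat.cast_add,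
    Nat.reduceAdd, Nat.reduceSubDiff, mul_comm]
  ring

theorem lt_two_pow_sub_one {k : ℕ} (hk : 3 ≤ k) : k < 2 ^ (k - 1) := by
  induction k, hk using Nat.le_induction with
  | base => norm_num
  | succ k hk ih =>
    rw [show k + 1 - 1 = k - 1 + 1 by omega, pow_succ]
    omega

theorem lt_pow_sub_two_mul_add_one {p ℓ k : ℕ} (hp : 2 ≤ p) (hℓ : 1 ≤ ℓ) (hk : 3 ≤ k) :
    k < p ^ ((k - 2) * ℓ + 1) :=
  calc k < 2 ^ (k - 1) := lt_two_pow_sub_one hk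
    _ ≤ 2 ^ ((k - 2) * ℓ + 1) := Nat.pow_le_pow_right two_pos (by
        have := Nat.mul_le_mul_left (k - 2) hℓ; omega)
    _ ≤ p ^ ((k - 2) * ℓ + 1) := Nat.pow_le_pow_left hp _

theorem pow_dvd_choose_mul_pow {p u ℓ x k : ℕ} {a : ℤ} (hp : p.Prime) (hx : p ^ u ∣ x)
    (ha : (p : ℤ) ^ ℓ ∣ a) (hk : 2 ≤ k) (hkp : k < p ^ ((k - 2) * ℓ + 1)) :
    (p : ℤ) ^ (u + 2 * ℓ) ∣ x.choose k * a ^ k := by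
  have hk_ndvd : ¬ (p : ℤ) ^ ((k - 2) * ℓ + 1) ∣ k := by
    exact_mod_cast fun h => (Nat.le_of_dvd (by omega) h).not_gt hkp
  refine pow_dvd_of_pow_add_dvd_mul (Nat.prime_iff_prime_int.mp hp) hk_ndvd ?_
  have hchoose : ((p ^ u : ℕ) : ℤ) ∣ (x.choose k * k : ℕ) :=
    Int.natCast_dvd_natCast.mpr (hx.trans (x.dvd_choose_mul k))
  have hpow : (p : ℤ) ^ (k * ℓ) ∣ a ^ k := by
    rw [mul_comm, pow_mul]; exact pow_dvd_pow_of_dvd ha k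
  calc (p : ℤ) ^ (u + 2 * ℓ + (k - 2) * ℓ) = (p : ℤ) ^ u * (p : ℤ) ^ (k * ℓ) := by
        rw [← pow_add]; congr 1
        have : k * ℓ = 2 * ℓ + (k - 2) * ℓ := by rw [← Nat.add_mul]; congr; omega
        omega
    _ ∣ (x.choose k * k : ℕ) * a ^ k := by push_cast at hchoose ⊢; exact mul_dvd_mul hchoose hpow
    _ = k * (x.choose k * a ^ k) := by push_cast; ring

theorem two_pow_dvd_choose_two_mul_sq_sub {x u ℓ : ℕ} {a : ℤ} (hu : 1 ≤ u) (hℓ : 1 ≤ ℓ)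
    (hx : 2 ^ u ∣ x) (ha : (2 : ℤ) ^ ℓ ∣ a) (ha' : ¬ (2 : ℤ) ^ (ℓ + 1) ∣ a) :
    (2 : ℤ) ^ (u + 2 * ℓ) ∣ x.choose 2 * a ^ 2 - 2 ^ (ℓ - 1) * x * a := by
  obtain ⟨t, rfl⟩ := ha
  obtain ⟨d, rfl⟩ : Odd t := Int.not_even_iff_odd.mp fun ⟨w, hw⟩ =>
    ha' ⟨w, by rw [hw, pow_succ]; ring⟩
  obtain ⟨m, rfl⟩ := hx
  obtain ⟨v, rfl⟩ : ∃ v, u = v + 1 := ⟨u - 1, by omega⟩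
  obtain ⟨l, rfl⟩ : ∃ l, ℓ = l + 1 := ⟨ℓ - 1, by omega⟩
  refine (mul_dvd_mul_iff_left (two_ne_zero' ℤ)).mp
    ⟨m * (2 * d + 1) * (2 ^ (v + 1) * m * d + 2 ^ v * m - d - 1), ?_⟩
  have h2 := Nat.cast_choose_two_mul_two (R := ℤ) (2 ^ (v + 1) * m)
  push_cast at h2 ⊢
  linear_combination (2 ^ (l + 1) * (2 * d + 1)) ^ 2 * h2

theorem geomS_modEq_of_pow_dvd {p : ℕ} (hp : p.Prime) {s : ℤ} {ℓ u x : ℕ} (hℓ : 1 ≤ ℓ)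
    (hs : (p : ℤ) ^ ℓ ∣ s - 1) (hs' : ¬ (p : ℤ) ^ (ℓ + 1) ∣ s - 1) (hx : p ^ u ∣ x) (c : ℤ)
    (hc : (p : ℤ) ^ (u + 2 * ℓ) ∣ x.choose 2 * (s - 1) ^ 2 - c * x * (s - 1)) :
    geomS s x ≡ (1 + c) * x [ZMOD (p : ℤ) ^ (ℓ + u)] := by
  have htail : (p : ℤ) ^ (u + 2 * ℓ) ∣ ∑ k ∈ Finset.Ico 3 (x + 1), x.choose k * (s - 1) ^ k :=
    Finset.dvd_sum fun k hk => pow_dvd_choose_mul_pow hp hx hs (by simp at hk; omega)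
      (lt_pow_sub_two_mul_add_one hp.two_le hℓ (Finset.mem_Ico.mp hk).1)
  have hexpand : (s - 1) * (geomS s x - (1 + c) * x) =
      (x.choose 2 * (s - 1) ^ 2 - c * x * (s - 1)) +
        ∑ k ∈ Finset.Ico 3 (x + 1), x.choose k * (s - 1) ^ k := by
    have hbinom := add_one_pow_eq_sum_Ico_three (s - 1) x
    rw [sub_add_cancel] at hbinom
    rw [geomS]
    linear_combination geom_sum_mul s x + hbinom
  refine (Int.modEq_of_dvd ?_).symm
  refine pow_dvd_of_pow_add_dvd_mul (Nat.prime_iff_prime_int.mp hp) hs' ?_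
  rw [hexpand, show ℓ + u + ℓ = u + 2 * ℓ by ring]
  exact dvd_add hc htail

theorem stmt_0_general (p : ℕ) (hp : p.Prime) (s : ℤ)
    (ℓ : ℕ) (hℓ : 1 < ℓ)
    (hℓ1 : (p : ℤ) ^ ℓ ∣ s - 1) (hℓ2 : ¬ (p : ℤ) ^ (ℓ + 1) ∣ s - 1)
    (x : ℕ) (u : ℕ) (hu : 0 < u)
    (hu1 : p ^ u ∣ x) :
    (p ≠ 2 → geomS s x ≡ (x : ℤ) [ZMOD (p : ℤ) ^ (ℓ + u)]) ∧
    (p = 2 → geomS s x ≡ (1 + 2 ^ (ℓ - 1)) * (x : ℤ) [ZMOD (2 : ℤ) ^ (ℓ + u)]) := by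
  constructor
  · intro hp2
    have hc := pow_dvd_choose_mul_pow hp hu1 hℓ1 le_rfl (by simpa using hp.two_le.lt_of_ne' hp2)
    simpa using geomS_modEq_of_pow_dvd hp hℓ.le hℓ1 hℓ2 hu1 0 (by simpa using hc)
  · rintro rfl
    push_cast at hℓ1 hℓ2 ⊢
    exact_mod_cast geomS_modEq_of_pow_dvd hp hℓ.le hℓ1 hℓ2 hu1 _
      (two_pow_dvd_choose_two_mul_sq_sub hu hℓ.le hu1 hℓ1 hℓ2)

theorem stmt_0 (p : ℕ) (hp : p.Prime) (s : ℤ) (hs : 1 < s)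
    (ℓ : ℕ) (hℓ : 1 < ℓ)
    (hℓ1 : (p : ℤ) ^ ℓ ∣ s - 1) (hℓ2 : ¬ (p : ℤ) ^ (ℓ + 1) ∣ s - 1)
    (x : ℕ) (hx : 0 < x) (u : ℕ) (hu : 0 < u)
    (hu1 : p ^ u ∣ x) (hu2 : ¬ p ^ (u + 1) ∣ x) :
    (p ≠ 2 → geomS s x ≡ (x : ℤ) [ZMOD (p : ℤ) ^ (ℓ + u)]) ∧
    (p = 2 → geomS s x ≡ (1 + 2 ^ (ℓ - 1)) * (x : ℤ) [ZMOD (2 : ℤ) ^ (ℓ + u)]) :=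
  stmt_0_general p hp s ℓ hℓ hℓ1 hℓ2 x u hu hu1
end

section
/- Let p be a prime, let s > 1 be an integer with deg_p(s−1) = ℓ > 1, and let x > 0 be an integer with deg_p(x) = u > 0. If p ≠ 2 then s^x − 1 ≡ (s−1)·x (mod p^{2ℓ+u}), and if p = 2 then s^x − 1 ≡ (s−1+2^{2ℓ−1})·x (mod 2^{2ℓ+u}). -/
/-!
Write `s = 1 + t` with `p^ℓ ∣ t` and expand `s^x` binomially. The `k`-th term `t^k (x choose k)` has
`p`-adic valuation at least `kℓ + u - v_p(k)`, because `k (x choose k) = x (x-1 choose k-1)`; since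
`v_p(k) ≤ k - 2` for `k ≥ 3`, every term with `k ≥ 3` vanishes modulo `p^(2ℓ+u)`. The term `k = 2`
vanishes too when `p` is odd; when `p = 2` it equals `2^(2ℓ-1) x w² (x-1)` with `t = 2^ℓ w`,
`w` odd and `x` even, and `w² (x-1)` is odd, so it is `2^(2ℓ-1) x` modulo `2^(2ℓ+u)`.
-/

open Finset

lemma pow_sub_padicValNat_dvd_choose {p u x k : ℕ} [Fact p.Prime] (hk : k ≠ 0) (hx : p ^ u ∣ x) :
    p ^ (u - padicValNat p k) ∣ x.choose k := by
  rcases eq_or_ne (x.choose k) 0 with h0 | h0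
  · simp [h0]
  obtain ⟨j, rfl⟩ := Nat.exists_eq_succ_of_ne_zero hk
  obtain ⟨n, rfl⟩ := Nat.exists_eq_succ_of_ne_zero (by rintro rfl; simp at h0 : x ≠ 0)
  have hmul : p ^ u ∣ (n + 1).choose (j + 1) * (j + 1) :=
    Nat.add_one_mul_choose_eq n j ▸ dvd_mul_of_dvd_left hx _
  rw [padicValNat_dvd_iff_le h0]
  have := (padicValNat_dvd_iff_le (mul_ne_zero h0 hk)).1 hmul
  rw [padicValNat.mul h0 hk] at this
  omega

lemma padicValNat_le_sub_two {p k : ℕ} [Fact p.Prime] (hk : 3 ≤ k) : padicValNat p k ≤ k - 2 := by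
  have hpow : 2 ^ padicValNat p k ≤ k :=
    (Nat.pow_le_pow_left (Fact.out : p.Prime).two_le _).trans
      (Nat.le_of_dvd (by omega) pow_padicValNat_dvd)
  have hk' : k < 2 ^ (k - 1) := by
    obtain ⟨m, rfl⟩ := Nat.exists_eq_add_of_le' hk
    have := Nat.lt_two_pow_self (n := m)
    rw [show m + 3 - 1 = m + 2 by omega, pow_add]
    omega
  have := Nat.pow_lt_pow_iff_right (a := 2) (by norm_num) |>.1 (hpow.trans_lt hk')
  omega

lemma pow_dvd_pow_mul_choose {p : ℕ} [Fact p.Prime] {t : ℤ} {ℓ u x k : ℕ}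
    (ht : (p : ℤ) ^ ℓ ∣ t) (hx : p ^ u ∣ x) (hk : 2 ≤ k) (hv : padicValNat p k ≤ (k - 2) * ℓ) :
    (p : ℤ) ^ (2 * ℓ + u) ∣ t ^ k * x.choose k := by
  have ht' : (p : ℤ) ^ (ℓ * k) ∣ t ^ k := pow_mul (p : ℤ) ℓ k ▸ pow_dvd_pow_of_dvd ht k
  have hx' : (p : ℤ) ^ (u - padicValNat p k) ∣ x.choose k := by
    exact_mod_cast pow_sub_padicValNat_dvd_choose (by omega) hx
  have hℓk : ℓ * k = 2 * ℓ + (k - 2) * ℓ := by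
    obtain ⟨j, rfl⟩ := Nat.exists_eq_add_of_le' hk
    simp only [Nat.add_sub_cancel]; ring
  refine (pow_dvd_pow _ ?_).trans (pow_add (p : ℤ) _ _ ▸ mul_dvd_mul ht' hx')
  omega

lemma add_one_pow_eq {R : Type*} [CommSemiring R] (t : R) (x : ℕ) :
    (t + 1) ^ x = 1 + t * x + t ^ 2 * x.choose 2 + ∑ k ∈ range x, t ^ (k + 3) * x.choose (k + 3) := by
  have hext : ∑ k ∈ range (x + 1), t ^ k * x.choose k = ∑ k ∈ range (x + 3), t ^ k * x.choose k := by
    simp [sum_range_succ _ (x + 1), sum_range_succ _ (x + 2), Nat.choose_eq_zero_of_lt]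
  rw [add_pow]
  simp only [one_pow, mul_one]
  rw [hext, sum_range_succ', sum_range_succ', sum_range_succ']
  simp only [zero_add, Nat.reduceAdd, pow_zero, pow_one, Nat.choose_zero_right,
    Nat.choose_one_right, Nat.cast_one, mul_one]
  ring

lemma add_one_pow_modEq {p : ℕ} [Fact p.Prime] {t : ℤ} {ℓ u x : ℕ} (hℓ : 1 ≤ ℓ)
    (ht : (p : ℤ) ^ ℓ ∣ t) (hx : p ^ u ∣ x) :
    (t + 1) ^ x ≡ 1 + t * x + t ^ 2 * x.choose 2 [ZMOD (p : ℤ) ^ (2 * ℓ + u)] := by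
  refine (Int.modEq_iff_dvd.2 ?_).symm
  rw [add_one_pow_eq, add_sub_cancel_left]
  refine dvd_sum fun k _ => pow_dvd_pow_mul_choose ht hx (by omega) ?_
  exact (padicValNat_le_sub_two (by omega)).trans (Nat.le_mul_of_pos_right _ hℓ)

lemma sq_mul_choose_two_modEq {t : ℤ} {ℓ u x : ℕ} (hℓ : 1 ≤ ℓ) (ht : 2 ^ ℓ ∣ t)
    (ht' : ¬ 2 ^ (ℓ + 1) ∣ t) (hu : 1 ≤ u) (hx : 2 ^ u ∣ x) :
    t ^ 2 * x.choose 2 ≡ 2 ^ (2 * ℓ - 1) * x [ZMOD 2 ^ (2 * ℓ + u)] := by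
  obtain ⟨a, rfl⟩ : ∃ a, ℓ = a + 1 := ⟨ℓ - 1, by omega⟩
  obtain ⟨b, rfl⟩ : ∃ b, u = b + 1 := ⟨u - 1, by omega⟩
  obtain ⟨w, rfl⟩ := ht
  obtain ⟨c, rfl⟩ : Odd w := by
    refine Int.not_even_iff_odd.1 fun ⟨c, hc⟩ => ht' ⟨c, ?_⟩
    rw [hc]; ring
  obtain ⟨m, rfl⟩ := hx
  have hC : ((2 ^ (b + 1) * m).choose 2 : ℤ) = 2 ^ b * m * (2 ^ (b + 1) * m - 1) := by
    qify
    rw [Nat.cast_choose_two]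
    push_cast
    ring
  rw [Int.modEq_iff_dvd, hC, show 2 * (a + 1) - 1 = 2 * a + 1 by omega]
  push_cast
  -- with `w = 2c + 1` and `x = 2n`: `w² (x - 1) - 1 = 2 ((4c² + 4c + 1) n - 2c² - 2c - 1)`
  exact ⟨-(m * ((4 * c ^ 2 + 4 * c + 1) * (2 ^ b * m) - 2 * c ^ 2 - 2 * c - 1)), by ring⟩

theorem stmt_1_general (p : ℕ) (hp : p.Prime) (s : ℤ)
    (ℓ : ℕ) (hℓ : 1 < ℓ)
    (hℓ1 : (p : ℤ) ^ ℓ ∣ s - 1) (hℓ2 : ¬ (p : ℤ) ^ (ℓ + 1) ∣ s - 1)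
    (x : ℕ) (u : ℕ) (hu : 0 < u)
    (hu1 : p ^ u ∣ x) :
    (p ≠ 2 → s ^ x - 1 ≡ (s - 1) * (x : ℤ) [ZMOD (p : ℤ) ^ (2 * ℓ + u)]) ∧
    (p = 2 → s ^ x - 1 ≡ (s - 1 + 2 ^ (2 * ℓ - 1)) * (x : ℤ) [ZMOD (2 : ℤ) ^ (2 * ℓ + u)]) := by
  have := Fact.mk hp
  have hexp : s ^ x - 1 ≡ (s - 1) * x + (s - 1) ^ 2 * x.choose 2 [ZMOD (p : ℤ) ^ (2 * ℓ + u)] := by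
    have := (add_one_pow_modEq (by omega) hℓ1 hu1).sub_right 1
    rwa [sub_add_cancel, add_assoc, add_sub_cancel_left] at this
  constructor
  · intro hp2
    have hv : padicValNat p 2 = 0 :=
      padicValNat.eq_zero_of_not_dvd fun h => hp2 ((Nat.prime_dvd_prime_iff_eq hp Nat.prime_two).1 h)
    have hsq := pow_dvd_pow_mul_choose hℓ1 hu1 le_rfl (by omega)
    simpa using hexp.trans ((Int.modEq_zero_iff_dvd.2 hsq).add_left _)
  · rintro rfl
    push_cast at hexp hℓ1 hℓ2
    have hsq := sq_mul_choose_two_modEq (by omega) hℓ1 hℓ2 hu hu1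
    exact hexp.trans (by simpa [add_mul] using hsq.add_left ((s - 1) * x))

theorem stmt_1 (p : ℕ) (hp : p.Prime) (s : ℤ) (hs : 1 < s)
    (ℓ : ℕ) (hℓ : 1 < ℓ)
    (hℓ1 : (p : ℤ) ^ ℓ ∣ s - 1) (hℓ2 : ¬ (p : ℤ) ^ (ℓ + 1) ∣ s - 1)
    (x : ℕ) (hx : 0 < x) (u : ℕ) (hu : 0 < u)
    (hu1 : p ^ u ∣ x) (hu2 : ¬ p ^ (u + 1) ∣ x) :
    (p ≠ 2 → s ^ x - 1 ≡ (s - 1) * (x : ℤ) [ZMOD (p : ℤ) ^ (2 * ℓ + u)]) ∧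
    (p = 2 → s ^ x - 1 ≡ (s - 1 + 2 ^ (2 * ℓ - 1)) * (x : ℤ) [ZMOD (2 : ℤ) ^ (2 * ℓ + u)]) :=
  stmt_1_general p hp s ℓ hℓ hℓ1 hℓ2 x u hu hu1
end

section
/- The commutator subgroup [H,H] of H = H(n,m;t,r) is the cyclic subgroup generated by a^{r−1}. -/
/-- The relations of the metacyclic group
`H(n,m;t,r) = ⟨a, b ∣ aⁿ = e, bᵐ = aᵗ, b a b⁻¹ = aʳ⟩`,
where the generator `a` is indexed by `0 : Fin 2` and `b` by `1 : Fin 2`. -/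
def metaRels (n m t r : ℕ) : Set (FreeGroup (Fin 2)) :=
  {FreeGroup.of 0 ^ n,
   FreeGroup.of 1 ^ m * (FreeGroup.of 0 ^ t)⁻¹,
   FreeGroup.of 1 * FreeGroup.of 0 * (FreeGroup.of 1)⁻¹ * (FreeGroup.of 0 ^ r)⁻¹}

/-- The metacyclic group `H(n,m;t,r)`. -/
abbrev MetaGroup (n m t r : ℕ) : Type := PresentedGroup (metaRels n m t r)

/-- The generator `a` of `H(n,m;t,r)`. -/
def gena (n m t r : ℕ) : MetaGroup n m t r := PresentedGroup.of 0

/-- The generator `b` of `H(n,m;t,r)`. -/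
def genb (n m t r : ℕ) : MetaGroup n m t r := PresentedGroup.of 1

/-!
Conjugation by `b` acts on `⟨a⟩` as `a ↦ aʳ`, and since `bᵐ = aᵗ` commutes with `a`, conjugation
by `b⁻¹ = bᵐ⁻¹ b⁻ᵐ` acts as `a ↦ a^(r^(m-1))`. Hence `K = ⟨a^(r-1)⟩` is normalised by both
generators and is normal. As `[b, a] = a^(r-1)`, the quotient `H/K` is generated by two commuting
elements, so it is abelian and `[H, H] ≤ K`; the reverse inclusion holds because `a^(r-1)` is a
commutator.
-/

open Subgroup
open scoped commutatorElement

section Generic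

variable {G : Type*} [Group G]

theorem mem_normalizer_zpowers {x g : G} (hg : g * x * g⁻¹ ∈ zpowers x)
    (hg' : g⁻¹ * x * g ∈ zpowers x) : g ∈ normalizer (zpowers x : Set G) := by
  have conj_mem : ∀ g' : G, g' * x * g'⁻¹ ∈ zpowers x →
      ∀ y ∈ zpowers x, g' * y * g'⁻¹ ∈ zpowers x := by
    rintro g' hg' _ ⟨z, rfl⟩
    rw [← conj_zpow]
    exact zpow_mem hg' z
  refine mem_normalizer_iff.mpr fun y ↦ ⟨conj_mem g hg y, fun hy ↦ ?_⟩
  simpa [mul_assoc] using conj_mem g⁻¹ (by simpa using hg') _ hy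

theorem zpowers_normal_of_closure_eq_top {s : Set G} (hs : Subgroup.closure s = ⊤) {x : G}
    (hx : ∀ g ∈ s, g * x * g⁻¹ ∈ zpowers x ∧ g⁻¹ * x * g ∈ zpowers x) :
    (zpowers x).Normal := by
  rw [← normalizer_eq_top_iff, eq_top_iff, ← hs, Subgroup.closure_le]
  exact fun g hg ↦ mem_normalizer_zpowers (hx g hg).1 (hx g hg).2

theorem commutator_le_of_closure_eq_top {s : Set G} (hs : Subgroup.closure s = ⊤) {N : Subgroup G}
    [N.Normal] (hN : ∀ x ∈ s, ∀ y ∈ s, ⁅x, y⁆ ∈ N) : commutator G ≤ N := by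
  let π := QuotientGroup.mk' N
  have hcomm : ∀ x ∈ π '' s, ∀ y ∈ π '' s, x * y = y * x := by
    rintro _ ⟨x, hx, rfl⟩ _ ⟨y, hy, rfl⟩
    rw [← commutatorElement_eq_one_iff_mul_comm, ← map_commutatorElement,
      QuotientGroup.mk'_apply, QuotientGroup.eq_one_iff]
    exact hN x hx y hy
  have hπs : Subgroup.closure (π '' s) = ⊤ := by
    rw [← MonoidHom.map_closure, hs, ← MonoidHom.range_eq_map,
      MonoidHom.range_eq_top.mpr (QuotientGroup.mk'_surjective N)]
  have := isMulCommutative_closure hcomm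
  rw [commutator_def, commutator_le]
  intro g _ h _
  rw [← QuotientGroup.eq_one_iff, ← QuotientGroup.mk'_apply, map_commutatorElement,
    commutatorElement_eq_one_iff_mul_comm]
  exact setLike_mul_comm (hπs ▸ mem_top (π g)) (hπs ▸ mem_top (π h))

variable {a b : G} {r : ℕ}

theorem pow_mul_mul_inv_pow_of_conj_eq (hba : b * a * b⁻¹ = a ^ r) (j : ℕ) :
    b ^ j * a * (b ^ j)⁻¹ = a ^ r ^ j := by
  induction j with
  | zero => simp
  | succ j ih =>
    calc b ^ (j + 1) * a * (b ^ (j + 1))⁻¹ = b * (b ^ j * a * (b ^ j)⁻¹) * b⁻¹ := by group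
      _ = a ^ r ^ (j + 1) := by rw [ih, ← conj_pow, hba, ← pow_mul, ← pow_succ']

theorem inv_mul_mul_of_conj_eq (hba : b * a * b⁻¹ = a ^ r) {k : ℕ}
    (hbk : Commute (b ^ (k + 1)) a) : b⁻¹ * a * b = a ^ r ^ k :=
  calc b⁻¹ * a * b = b ^ k * ((b ^ (k + 1))⁻¹ * a * b ^ (k + 1)) * (b ^ k)⁻¹ := by group
    _ = a ^ r ^ k := by
      rw [hbk.inv_left.eq, inv_mul_cancel_right, pow_mul_mul_inv_pow_of_conj_eq hba]

theorem commutator_eq_zpowers_of_conj_eq (hs : Subgroup.closure {a, b} = ⊤) (hr : 0 < r)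
    (hba : b * a * b⁻¹ = a ^ r) {m : ℕ} (hm : 0 < m) (hbm : Commute (b ^ m) a) :
    commutator G = zpowers (a ^ (r - 1)) := by
  obtain ⟨k, rfl⟩ : ∃ k, m = k + 1 := ⟨m - 1, by omega⟩
  have hcomm : ⁅b, a⁆ = a ^ (r - 1) := by
    rw [commutatorElement_def, hba, pow_sub a hr, pow_one]
  have hb : b * a ^ (r - 1) * b⁻¹ = (a ^ (r - 1)) ^ r := by
    rw [← conj_pow, hba, ← pow_mul, ← pow_mul, mul_comm]
  have hb' : b⁻¹ * a ^ (r - 1) * b = (a ^ (r - 1)) ^ r ^ k := by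
    have := conj_pow (a := b⁻¹) (b := a) (i := r - 1)
    rw [inv_inv] at this
    rw [← this, inv_mul_mul_of_conj_eq hba hbm, ← pow_mul, ← pow_mul, mul_comm]
  have : (zpowers (a ^ (r - 1))).Normal := by
    refine zpowers_normal_of_closure_eq_top hs fun g hg ↦ ?_
    rcases hg with rfl | rfl
    · have hg := Commute.self_pow g (r - 1)
      rw [hg.eq, mul_inv_cancel_right, mul_assoc, ← hg.eq, inv_mul_cancel_left]
      exact ⟨mem_zpowers _, mem_zpowers _⟩
    · rw [hb, hb']
      exact ⟨npow_mem_zpowers _ _, npow_mem_zpowers _ _⟩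
  refine le_antisymm (commutator_le_of_closure_eq_top hs ?_) ?_
  · rintro x (rfl | rfl) y (rfl | rfl)
    · simp
    · rw [← commutatorElement_inv, hcomm]
      exact inv_mem (mem_zpowers _)
    · rw [hcomm]
      exact mem_zpowers _
    · simp
  · rw [zpowers_le, ← hcomm]
    exact commutator_mem_commutator (mem_top b) (mem_top a)

end Generic

section Presentation

variable {n m t r : ℕ}

theorem genb_mul_gena_mul_inv : genb n m t r * gena n m t r * (genb n m t r)⁻¹ =
    gena n m t r ^ r := by
  have h := PresentedGroup.mk_eq_mk_of_mul_inv_mem (rels := metaRels n m t r)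
    (x := FreeGroup.of 1 * FreeGroup.of 0 * (FreeGroup.of 1)⁻¹) (y := FreeGroup.of 0 ^ r)
    (by simp [metaRels])
  unfold genb gena PresentedGroup.of
  simpa only [map_mul, map_inv, map_pow] using h

theorem genb_pow : genb n m t r ^ m = gena n m t r ^ t := by
  have h := PresentedGroup.mk_eq_mk_of_mul_inv_mem (rels := metaRels n m t r)
    (x := FreeGroup.of 1 ^ m) (y := FreeGroup.of 0 ^ t) (by simp [metaRels])
  unfold genb gena PresentedGroup.of
  simpa only [map_pow] using h

theorem closure_gena_genb : Subgroup.closure {gena n m t r, genb n m t r} = ⊤ := by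
  rw [← PresentedGroup.closure_range_of, Set.range]
  congr
  ext
  simp [Fin.exists_fin_two, gena, genb, eq_comm]

end Presentation

theorem stmt_5_general (n m t r : ℕ) (hm : 0 < m) (hr : 0 < r) :
    commutator (MetaGroup n m t r) = Subgroup.zpowers (gena n m t r ^ (r - 1)) :=
  commutator_eq_zpowers_of_conj_eq closure_gena_genb hr genb_mul_gena_mul_inv hm
    (by rw [genb_pow]; exact (Commute.refl _).pow_left t)

theorem stmt_5 (n m t r : ℕ) (hn : 0 < n) (hm : 0 < m) (ht : 0 < t) (hr : 0 < r)
    (hrm : n ∣ r ^ m - 1) (htr : n ∣ t * (r - 1)) :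
    commutator (MetaGroup n m t r) = Subgroup.zpowers (gena n m t r ^ (r - 1)) :=
  stmt_5_general n m t r hm hr
end

section
/- In H(n,m;t,r), for integers u, v ≥ 0 one has a^u b^v = e if and only if m divides v and n divides u + t·(v/m). -/
/-!
`H(n,m;t,r)` acts on the normal forms `a ^ x * b ^ y`, `(x, y) ∈ ZMod n × ZMod m`, by left
multiplication: `a` shifts `x` by `1`, while `b` sends `(x, y)` to `(r * x, y + 1)`, adding a carry
`t` to the first coordinate when `y + 1` wraps around to `0` (since `b ^ m = a ^ t`). As `r` is a
unit mod `n` and `t * r ≡ t`, this is a well-defined action, and `a ^ u * b ^ v` moves `(0, 0)` to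
`(u + t * (v / m), v)`; so `a ^ u * b ^ v = 1` forces both divisibilities. Conversely, if `v = m * k`
then `a ^ u * b ^ v = a ^ (u + t * k)`, which is trivial as soon as `n ∣ u + t * k`.
-/

open Equiv

theorem Nat.add_div_eq_div_add_mod_add_div (a b : ℕ) {m : ℕ} (hm : 0 < m) :
    (a + b) / m = a / m + (a % m + b) / m := by
  conv_lhs => rw [← Nat.mod_add_div a m]
  rw [add_right_comm, Nat.add_mul_div_left _ _ hm, add_comm]

theorem ZMod.natCast_eq_natCast_of_dvd_sub {a b n : ℕ} (hba : b ≤ a) (h : n ∣ a - b) :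
    (a : ZMod n) = b :=
  ((ZMod.natCast_eq_natCast_iff _ _ _).mpr ((Nat.modEq_iff_dvd' hba).mpr h)).symm

section SkewShift

variable {R G : Type*}

def skewShift [Ring R] [AddGroup G] (ρ : Rˣ) (c : G → R) (g : G) : Perm (R × G) where
  toFun p := (ρ * p.1 + c p.2, p.2 + g)
  invFun p := (↑ρ⁻¹ * (p.1 - c (p.2 - g)), p.2 - g)
  left_inv p := by simp
  right_inv p := by simp

@[simp]
theorem skewShift_apply [Ring R] [AddGroup G] (ρ : Rˣ) (c : G → R) (g : G) (p : R × G) :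
    skewShift ρ c g p = (ρ * p.1 + c p.2, p.2 + g) :=
  rfl

theorem skewShift_mul_addRight [Ring R] [AddGroup G] (ρ : Rˣ) (c : G → R) (g : G) (a : R) :
    skewShift ρ c g * Equiv.addRight (a, 0) = Equiv.addRight (ρ * a, 0) * skewShift ρ c g := by
  ext p <;> simp [mul_add, add_right_comm]

-- `(y.val + 1) / m` is `1` when `y + 1` wraps around to `0`, and `0` otherwise.
def carryShift [Ring R] (m : ℕ) (ρ : Rˣ) (τ : R) : Perm (R × ZMod m) :=
  skewShift ρ (fun y => τ * ((y.val + 1) / m : ℕ)) 1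

variable [CommRing R] {m : ℕ} [NeZero m] {ρ : Rˣ} {τ : R}

theorem carryShift_pow_apply (hτ : τ * ρ = τ) (k : ℕ) (x : R) (y : ZMod m) :
    (carryShift m ρ τ ^ k) (x, y) = (ρ ^ k * x + τ * ((y.val + k) / m : ℕ), y + k) := by
  induction k with
  | zero => simp [Nat.div_eq_of_lt (ZMod.val_lt y)]
  | succ k ih =>
    have hval : (y + k : ZMod m).val = (y.val + k) % m := by
      rw [ZMod.val_add, ZMod.val_natCast, Nat.add_mod_mod]
    have hdiv := Nat.add_div_eq_div_add_mod_add_div (y.val + k) 1 (NeZero.pos m)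
    rw [pow_succ', Perm.mul_apply, ih, carryShift, skewShift_apply, hval, ← add_assoc, hdiv]
    push_cast
    ext
    · linear_combination ((y.val + k) / m : ℕ) * hτ
    · ring

theorem carryShift_pow_eq_addRight (hρ : ρ ^ m = 1) (hτ : τ * ρ = τ) :
    carryShift m ρ τ ^ m = Equiv.addRight (τ, 0) := by
  ext ⟨x, y⟩
  · rw [carryShift_pow_apply hτ, ← Units.val_pow_eq_pow_val, hρ,
      Nat.add_div_right _ (NeZero.pos m), Nat.div_eq_of_lt (ZMod.val_lt y)]
    simp [add_comm]
  · simp [carryShift_pow_apply hτ]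

end SkewShift

namespace MetaGroup

variable {n m t r : ℕ}

-- `(x, y)` encodes `a ^ x * b ^ y`, and the generators act by left multiplication.
def toPerm (hm : 0 < m) (hrm : (r : ZMod n) ^ m = 1) (htr : (t : ZMod n) * r = t) :
    MetaGroup n m t r →* Perm (ZMod n × ZMod m) :=
  have : NeZero m := ⟨hm.ne'⟩
  PresentedGroup.toGroup
    (f := ![Equiv.addRight (1, 0), carryShift m (Units.ofPowEqOne _ m hrm hm.ne') t])
    (by
      rintro w (rfl | rfl | rfl) <;>
        simp only [map_mul, map_inv, map_pow, FreeGroup.lift_apply_of, Matrix.cons_val_zero,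
          Matrix.cons_val_one, mul_inv_eq_one]
      · simp [Equiv.nsmul_addRight, Prod.mk_zero_zero]
      · rw [carryShift_pow_eq_addRight (Units.pow_ofPowEqOne _ _) (by rwa [Units.val_ofPowEqOne]),
          Equiv.nsmul_addRight]
        simp
      · rw [mul_inv_eq_iff_eq_mul, carryShift, skewShift_mul_addRight, Equiv.nsmul_addRight]
        simp)

theorem toPerm_gena_pow_mul_genb_pow_zero (hm : 0 < m) (hrm : (r : ZMod n) ^ m = 1)
    (htr : (t : ZMod n) * r = t) (u v : ℕ) :
    toPerm hm hrm htr (gena n m t r ^ u * genb n m t r ^ v) 0 =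
      (((u + t * (v / m) : ℕ) : ZMod n), (v : ZMod m)) := by
  have : NeZero m := ⟨hm.ne'⟩
  have htr' : (t : ZMod n) * Units.ofPowEqOne _ m hrm hm.ne' = t := by rwa [Units.val_ofPowEqOne]
  rw [map_mul, map_pow, map_pow, Perm.mul_apply, ← Prod.mk_zero_zero, toPerm, gena, genb,
    PresentedGroup.toGroup.of, PresentedGroup.toGroup.of]
  ext <;> simp [carryShift_pow_apply htr', Equiv.nsmul_addRight, add_comm]

theorem gena_pow_eq_one : gena n m t r ^ n = 1 := by
  have := PresentedGroup.one_of_mem (rels := metaRels n m t r)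
    (Set.mem_insert (FreeGroup.of 0 ^ n) _)
  rwa [map_pow] at this

theorem genb_pow_eq_gena_pow : genb n m t r ^ m = gena n m t r ^ t := by
  have := PresentedGroup.mk_eq_mk_of_mul_inv_mem (rels := metaRels n m t r)
    (Set.mem_insert_of_mem _ (Set.mem_insert (FreeGroup.of 1 ^ m * (FreeGroup.of 0 ^ t)⁻¹) _))
  rwa [map_pow, map_pow] at this

end MetaGroup

theorem stmt_6_general (n m t r : ℕ) (hm : 0 < m) (hr : 0 < r)
    (hrm : n ∣ r ^ m - 1) (htr : n ∣ t * (r - 1)) (u v : ℕ) :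
    gena n m t r ^ u * genb n m t r ^ v = 1 ↔ m ∣ v ∧ n ∣ u + t * (v / m) := by
  have hrm' : (r : ZMod n) ^ m = 1 := by
    exact_mod_cast ZMod.natCast_eq_natCast_of_dvd_sub (Nat.one_le_pow _ _ hr) hrm
  have htr' : (t : ZMod n) * r = t := by
    exact_mod_cast ZMod.natCast_eq_natCast_of_dvd_sub (Nat.le_mul_of_pos_right t hr)
      (by rwa [← Nat.mul_sub_one])
  constructor
  · intro h
    have h0 := MetaGroup.toPerm_gena_pow_mul_genb_pow_zero hm hrm' htr' u v
    rw [h, map_one, Perm.one_apply, eq_comm, Prod.mk_eq_zero, ZMod.natCast_eq_zero_iff,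
      ZMod.natCast_eq_zero_iff] at h0
    exact h0.symm
  · rintro ⟨⟨k, rfl⟩, j, hj⟩
    rw [Nat.mul_div_cancel_left k hm] at hj
    rw [pow_mul, MetaGroup.genb_pow_eq_gena_pow, ← pow_mul, ← pow_add, hj, pow_mul,
      MetaGroup.gena_pow_eq_one, one_pow]

theorem stmt_6 (n m t r : ℕ) (hn : 0 < n) (hm : 0 < m) (ht : 0 < t) (hr : 0 < r)
    (hrm : n ∣ r ^ m - 1) (htr : n ∣ t * (r - 1)) (u v : ℕ) :
    gena n m t r ^ u * genb n m t r ^ v = 1 ↔ m ∣ v ∧ n ∣ u + t * (v / m) :=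
  stmt_6_general n m t r hm hr hrm htr u v
end

section
/- Let x₁, x₂, y₁, y₂ be nonnegative integers and set d = gcd(r−1, n). There exists a group homomorphism σ : H → H with σ(a) = a^{x₁} b^{y₁} and σ(b) = a^{x₂} b^{y₂} if and only if the following three conditions hold: (1) gcd(d,t)·y₁ ≡ 0 (mod m); (2) x₂·[m]_{r^{y₂}} + t·y₂ − x₁·[t]_{r^{y₁}} − (t·y₁/m)·t ≡ 0 (mod n); (3) (r^{y₁}−1)·x₂ + ([r]_{r^{y₁}} − r^{y₂})·x₁ + ((r−1)·y₁/m)·t ≡ 0 (mod n). (Condition (1) guarantees that m divides t·y₁ and m divides (r−1)·y₁, so the quotients in (2) and (3) are integers.) -/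
theorem natCast_eq_mul_iff {a m : ℕ} (hm : 0 < m) {k : ℤ} :
    (a : ℤ) = k * m ↔ m ∣ a ∧ ((a / m : ℕ) : ℤ) = k := by
  constructor
  · intro h
    refine ⟨Int.natCast_dvd_natCast.mp ⟨k, by rw [h, mul_comm]⟩, ?_⟩
    rw [Int.natCast_div, h, Int.mul_ediv_cancel _ (by positivity)]
  · rintro ⟨hd, rfl⟩
    exact_mod_cast (Nat.div_mul_cancel hd).symm

theorem geomS_succ (s : ℤ) (k : ℕ) : geomS s (k + 1) = geomS s k + s ^ k :=
  Finset.sum_range_succ _ _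

theorem geomS_mul (s : ℤ) (a b : ℕ) : geomS s (a * b) = geomS (s ^ a) b * geomS s a := by
  induction b with
  | zero => simp [geomS]
  | succ b ih =>
    rw [Nat.mul_succ, geomS_succ, add_mul, ← ih, geomS, geomS, geomS, Finset.sum_range_add,
      Finset.mul_sum]
    simp only [← pow_mul, ← pow_add]

theorem sub_one_dvd_geomS_sub (s : ℤ) (k : ℕ) : s - 1 ∣ geomS s k - k := by
  have : geomS s k - k = ∑ i ∈ Finset.range k, (s ^ i - 1) := by simp [geomS]
  rw [this]
  exact Finset.dvd_sum fun i _ => sub_one_dvd_pow_sub_one s i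

theorem dvd_geomS_mul {s : ℤ} {b e : ℕ} (hs : ((b * e : ℕ) : ℤ) ∣ s ^ b - 1)
    (hb : (b : ℤ) ∣ geomS s b) : ((b * e : ℕ) : ℤ) ∣ geomS s (b * e) := by
  obtain ⟨c, hc⟩ := hb
  obtain ⟨q, hq⟩ := hs.trans (sub_one_dvd_geomS_sub (s ^ b) e)
  rw [geomS_mul, hc, eq_add_of_sub_eq hq]
  exact ⟨c * (1 + b * q), by push_cast; ring⟩

theorem dvd_geomS_pow_self {n m t r y : ℕ} (hr : 0 < r) (htn : t ∣ n)
    (hrm : (n : ℤ) ∣ (r : ℤ) ^ m - 1) (hy : m ∣ Nat.gcd (Nat.gcd (r - 1) n) t * y) :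
    (n : ℤ) ∣ geomS ((r : ℤ) ^ y) n := by
  set d := Nat.gcd (Nat.gcd (r - 1) n) t
  have hdt : d ∣ t := Nat.gcd_dvd_right _ _
  have hd : (d : ℤ) ∣ geomS ((r : ℤ) ^ y) d := by
    have hdr : (d : ℤ) ∣ (r : ℤ) - 1 := by
      simpa [Nat.cast_sub hr] using Int.natCast_dvd_natCast.mpr
        (show d ∣ r - 1 from (Nat.gcd_dvd_left _ _).trans (Nat.gcd_dvd_left _ _))
    simpa using (hdr.trans (sub_one_dvd_pow_sub_one _ y)).trans (sub_one_dvd_geomS_sub _ d)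
  have hpow {j : ℕ} (hj : m ∣ y * j) : (n : ℤ) ∣ ((r : ℤ) ^ y) ^ j - 1 := by
    rw [← pow_mul]
    exact hrm.trans (dvd_pow_sub_one_of_dvd hj)
  have ht : (t : ℤ) ∣ geomS ((r : ℤ) ^ y) t := by
    obtain ⟨e, he⟩ := hdt
    rw [he] at htn ⊢
    exact dvd_geomS_mul ((Int.natCast_dvd_natCast.mpr htn).trans (hpow (by rwa [mul_comm]))) hd
  obtain ⟨q, hq⟩ := htn
  rw [hq] at hpow ⊢
  exact dvd_geomS_mul (hpow (by rw [mul_comm]; exact hy.trans (Nat.mul_dvd_mul_right hdt y))) ht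

theorem Units.val_zpow_mul_of_mul_eq {R : Type*} [Monoid R] {u : Rˣ} {x : R} (hx : u * x = x)
    (k : ℤ) : ((u ^ k : Rˣ) : R) * x = x :=
  MulAction.mem_stabilizer_iff.mp
    ((MulAction.stabilizer Rˣ x).zpow_mem (MulAction.mem_stabilizer_iff.mpr hx) k)

theorem Subgroup.zpowers_normal_of_mem_center {G : Type*} [Group G] {c : G}
    (hc : c ∈ Subgroup.center G) : (Subgroup.zpowers c).Normal :=
  ⟨fun _ hh g => by
    rwa [Subgroup.mem_center_iff.mp (Subgroup.zpowers_le.mpr hc hh) g, mul_inv_cancel_right]⟩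

/-- `R ⋊ ℤ`, with `ℤ` acting through powers of `u`: the pair `⟨x, j⟩` stands for the affine map
`z ↦ u ^ j * z + x` of `R`, and the product is composition. -/
@[ext] structure UnitSemidirect (R : Type*) [Ring R] (u : Rˣ) where
  x : R
  j : ℤ

namespace UnitSemidirect

variable {R : Type*} [Ring R] {u : Rˣ}

instance : Group (UnitSemidirect R u) where
  mul p q := ⟨p.x + (u ^ p.j : Rˣ) * q.x, p.j + q.j⟩
  one := ⟨0, 0⟩
  inv p := ⟨-((u ^ (-p.j) : Rˣ) * p.x), -p.j⟩
  mul_assoc p q s := by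
    ext
    · change p.x + ↑(u ^ p.j) * q.x + ↑(u ^ (p.j + q.j)) * s.x
        = p.x + ↑(u ^ p.j) * (q.x + ↑(u ^ q.j) * s.x)
      rw [zpow_add, Units.val_mul, mul_add, mul_assoc, add_assoc]
    · exact add_assoc _ _ _
  one_mul p := by
    change (⟨0 + ↑(u ^ (0 : ℤ)) * p.x, 0 + p.j⟩ : UnitSemidirect R u) = p
    simp
  mul_one p := by
    change (⟨p.x + ↑(u ^ p.j) * 0, p.j + 0⟩ : UnitSemidirect R u) = p
    simp
  inv_mul_cancel p := by
    change (⟨-(↑(u ^ (-p.j)) * p.x) + ↑(u ^ (-p.j)) * p.x, -p.j + p.j⟩ : UnitSemidirect R u)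
      = ⟨0, 0⟩
    simp

theorem mk_mul_mk (x x' : R) (j j' : ℤ) :
    (⟨x, j⟩ * ⟨x', j'⟩ : UnitSemidirect R u) = ⟨x + (u ^ j : Rˣ) * x', j + j'⟩ := rfl

@[simp] theorem mk_zero_zero : (⟨0, 0⟩ : UnitSemidirect R u) = 1 := rfl

theorem inv_mk (x : R) (j : ℤ) :
    (⟨x, j⟩⁻¹ : UnitSemidirect R u) = ⟨-((u ^ (-j) : Rˣ) * x), -j⟩ := rfl

theorem mk_zpow {x : R} {j : ℤ} (hx : ((u ^ j : Rˣ) : R) * x = x) (k : ℤ) :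
    (⟨x, j⟩ : UnitSemidirect R u) ^ k = ⟨k * x, k * j⟩ := by
  have hfix (i : ℤ) : ((u ^ (i * j) : Rˣ) : R) * x = x := by
    rw [mul_comm, zpow_mul]
    exact Units.val_zpow_mul_of_mul_eq hx i
  induction k using Int.induction_on with
  | zero => simp
  | succ k ih =>
    rw [zpow_add_one, ih, mk_mul_mk, hfix]
    ext
    · push_cast
      rw [add_mul, one_mul]
    · ring
  | pred k ih =>
    rw [zpow_sub_one, ih, inv_mk, show -j = -1 * j by ring, hfix, mk_mul_mk, mul_neg, hfix]
    ext
    · push_cast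
      rw [sub_mul, one_mul, sub_eq_add_neg]
    · ring

theorem mk_mem_center {x : R} {j : ℤ} (hj : u ^ j = 1) (hx : (u : R) * x = x) :
    (⟨x, j⟩ : UnitSemidirect R u) ∈ Subgroup.center (UnitSemidirect R u) := by
  refine Subgroup.mem_center_iff.mpr fun ⟨y, i⟩ => ?_
  rw [mk_mul_mk, mk_mul_mk, hj, Units.val_zpow_mul_of_mul_eq hx]
  ext
  · simp [add_comm]
  · exact add_comm _ _

theorem mk_eq_mk_iff {x₀ : R} {m : ℤ} (hx₀ : (u : R) * x₀ = x₀) (p p' : UnitSemidirect R u) :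
    (p : UnitSemidirect R u ⧸ Subgroup.zpowers ⟨x₀, m⟩) = p' ↔
      ∃ k : ℤ, p'.x = p.x + k * x₀ ∧ p'.j = p.j + k * m := by
  rw [QuotientGroup.eq, Subgroup.mem_zpowers_iff]
  refine exists_congr fun k => ?_
  obtain ⟨x, j⟩ := p
  obtain ⟨x', j'⟩ := p'
  rw [mk_zpow (Units.val_zpow_mul_of_mul_eq hx₀ _), eq_inv_mul_iff_mul_eq, mk_mul_mk,
    (Int.cast_commute k _).symm.left_comm, Units.val_zpow_mul_of_mul_eq hx₀, mk.injEq, eq_comm,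
    @eq_comm _ j']

end UnitSemidirect

namespace MetaGroup

variable {n m t r : ℕ}

local notation "𝐚" => gena n m t r
local notation "𝐛" => genb n m t r

theorem gena_pow_n : 𝐚 ^ n = 1 := by
  have : PresentedGroup.mk (metaRels n m t r) (.of 0 ^ n) = 1 :=
    PresentedGroup.one_of_mem (by simp [metaRels])
  simpa [gena, PresentedGroup.of] using this

theorem genb_pow_m : 𝐛 ^ m = 𝐚 ^ t := by
  have : PresentedGroup.mk (metaRels n m t r) (.of 1 ^ m * (.of 0 ^ t)⁻¹) = 1 :=
    PresentedGroup.one_of_mem (by simp [metaRels])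
  simpa [gena, genb, PresentedGroup.of, mul_inv_eq_one] using this

theorem genb_mul_gena_mul_inv : 𝐛 * 𝐚 * 𝐛⁻¹ = 𝐚 ^ r := by
  have : PresentedGroup.mk (metaRels n m t r) (.of 1 * .of 0 * (.of 1)⁻¹ * (.of 0 ^ r)⁻¹) = 1 :=
    PresentedGroup.one_of_mem (by simp [metaRels])
  simpa [gena, genb, PresentedGroup.of, mul_inv_eq_one] using this

theorem exists_hom_iff {G : Type*} [Group G] (g h : G) :
    (∃ σ : MetaGroup n m t r →* G, σ 𝐚 = g ∧ σ 𝐛 = h) ↔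
      g ^ n = 1 ∧ h ^ m = g ^ t ∧ h * g * h⁻¹ = g ^ r := by
  constructor
  · rintro ⟨σ, rfl, rfl⟩
    simp only [← map_pow, ← map_mul, ← map_inv, gena_pow_n, genb_pow_m, genb_mul_gena_mul_inv,
      map_one, and_self]
  · rintro ⟨h₁, h₂, h₃⟩
    refine ⟨PresentedGroup.toGroup (f := ![g, h]) ?_, PresentedGroup.toGroup.of _,
      PresentedGroup.toGroup.of _⟩
    rintro ρ (rfl | rfl | rfl) <;> simp [h₁, h₂, h₃]

/-! Below, `nf` names the normal-form words `𝐚 ^ X * 𝐛 ^ Y` with `X : ℤ`, `Y : ℕ`. -/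

theorem genb_pow_mul_gena_zpow (j : ℕ) (X : ℤ) :
    𝐛 ^ j * 𝐚 ^ X = 𝐚 ^ (X * (r : ℤ) ^ j) * 𝐛 ^ j := by
  have hconj (X : ℤ) : 𝐛 * 𝐚 ^ X = 𝐚 ^ (X * r) * 𝐛 := by
    rw [← mul_inv_eq_iff_eq_mul, ← conj_zpow, genb_mul_gena_mul_inv, ← zpow_natCast, ← zpow_mul,
      mul_comm]
  induction j generalizing X with
  | zero => simp
  | succ j ih =>
    rw [pow_succ, mul_assoc, hconj, ← mul_assoc, ih, mul_assoc, pow_succ', mul_assoc]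

theorem nf_mul (X X' : ℤ) (j j' : ℕ) :
    (𝐚 ^ X * 𝐛 ^ j) * (𝐚 ^ X' * 𝐛 ^ j') = 𝐚 ^ (X + X' * (r : ℤ) ^ j) * 𝐛 ^ (j + j') := by
  rw [mul_assoc, ← mul_assoc (𝐛 ^ j), genb_pow_mul_gena_zpow, mul_assoc, ← mul_assoc, ← zpow_add,
    ← pow_add]

theorem nf_pow (X : ℤ) (j k : ℕ) :
    (𝐚 ^ X * 𝐛 ^ j) ^ k = 𝐚 ^ (X * geomS ((r : ℤ) ^ j) k) * 𝐛 ^ (j * k) := by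
  induction k with
  | zero => simp [geomS]
  | succ k ih =>
    rw [pow_succ, ih, nf_mul, geomS_succ, ← pow_mul]
    ring_nf

theorem gena_zpow_eq_of_cast_eq {X X' : ℤ} (h : (X : ZMod n) = X') : 𝐚 ^ X = 𝐚 ^ X' := by
  rw [zpow_eq_zpow_emod' X gena_pow_n, zpow_eq_zpow_emod' X' gena_pow_n,
    (ZMod.intCast_eq_intCast_iff' _ _ _).mp h]

theorem nf_eq_nf_of {X X' : ℤ} {Y Y' : ℕ} (k : ℤ) (hY : (Y' : ℤ) = Y + k * m)
    (hX : (X : ZMod n) = X' + t * k) : 𝐚 ^ X * 𝐛 ^ Y = 𝐚 ^ X' * 𝐛 ^ Y' := by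
  have hb : 𝐛 ^ Y' = 𝐚 ^ ((t : ℤ) * k) * 𝐛 ^ Y := by
    rw [← zpow_natCast, hY, add_comm, zpow_add, mul_comm k, zpow_mul, zpow_natCast, genb_pow_m,
      ← zpow_natCast, ← zpow_mul, zpow_natCast]
  rw [hb, ← mul_assoc, ← zpow_add, gena_zpow_eq_of_cast_eq (X' := X' + t * k)]
  push_cast
  exact hX

section Faithful

variable (hm : 0 < m) (hrm : (r : ZMod n) ^ m = 1) (htr : (t : ZMod n) * r = t)
include hm hrm htr

theorem exists_of_nf_eq_nf {X X' : ℤ} {Y Y' : ℕ} (h : 𝐚 ^ X * 𝐛 ^ Y = 𝐚 ^ X' * 𝐛 ^ Y') :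
    ∃ k : ℤ, (Y' : ℤ) = Y + k * m ∧ (X : ZMod n) = X' + t * k := by
  set u := Units.ofPowEqOne _ m hrm hm.ne'
  have hu : (u : ZMod n) = r := Units.val_ofPowEqOne _ _ _ _
  have hfix : (u : ZMod n) * -t = -t := by rw [hu, mul_neg, mul_comm, htr]
  set c : UnitSemidirect (ZMod n) u := ⟨-t, m⟩
  have := Subgroup.zpowers_normal_of_mem_center
    (UnitSemidirect.mk_mem_center (x := -(t : ZMod n)) (j := m) (by simp [u]) hfix)
  set π := QuotientGroup.mk' (Subgroup.zpowers c)
  have hA (k : ℤ) : (⟨1, 0⟩ : UnitSemidirect (ZMod n) u) ^ k = ⟨k, 0⟩ := by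
    simp [UnitSemidirect.mk_zpow]
  have hB (k : ℤ) : (⟨0, 1⟩ : UnitSemidirect (ZMod n) u) ^ k = ⟨0, k⟩ := by
    simp [UnitSemidirect.mk_zpow]
  obtain ⟨F, hFa, hFb⟩ : ∃ F : MetaGroup n m t r →* _, F 𝐚 = π ⟨1, 0⟩ ∧ F 𝐛 = π ⟨0, 1⟩ := by
    refine (exists_hom_iff _ _).mpr ⟨?_, ?_, ?_⟩
    · rw [← map_pow, ← zpow_natCast, hA]
      simp
    · rw [← map_pow, ← map_pow, ← zpow_natCast, ← zpow_natCast, hA, hB, QuotientGroup.mk'_apply,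
        QuotientGroup.mk'_apply, UnitSemidirect.mk_eq_mk_iff hfix]
      exact ⟨-1, by simp, by simp⟩
    · rw [← map_pow, ← map_inv, ← map_mul, ← map_mul, ← zpow_natCast, hA]
      congr 1
      simp [UnitSemidirect.mk_mul_mk, UnitSemidirect.inv_mk, hu]
  have hF (X : ℤ) (Y : ℕ) : F (𝐚 ^ X * 𝐛 ^ Y) = (⟨X, Y⟩ : UnitSemidirect (ZMod n) u) := by
    rw [map_mul, map_zpow, map_pow, hFa, hFb, ← map_zpow, ← map_pow, ← map_mul, ← zpow_natCast,
      hA, hB, UnitSemidirect.mk_mul_mk]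
    simp [π]
  have := congrArg F h
  rw [hF, hF, UnitSemidirect.mk_eq_mk_iff hfix] at this
  obtain ⟨k, hx, hj⟩ := this
  exact ⟨k, hj, by linear_combination -hx⟩

theorem nf_eq_nf_iff {X X' : ℤ} {Y Y' : ℕ} :
    𝐚 ^ X * 𝐛 ^ Y = 𝐚 ^ X' * 𝐛 ^ Y' ↔
      ∃ k : ℤ, (Y' : ℤ) = Y + k * m ∧ (X : ZMod n) = X' + t * k :=
  ⟨exists_of_nf_eq_nf hm hrm htr, fun ⟨k, hY, hX⟩ => nf_eq_nf_of k hY hX⟩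

variable {x₁ x₂ y₁ y₂ : ℕ}

theorem nf_pow_n_eq_one_iff :
    (𝐚 ^ x₁ * 𝐛 ^ y₁) ^ n = 1 ↔
      m ∣ n * y₁ ∧ (n : ℤ) ∣ x₁ * geomS ((r : ℤ) ^ y₁) n + t * (n * y₁ / m : ℕ) := by
  rw [← zpow_natCast 𝐚 x₁, nf_pow, eq_comm,
    show (1 : MetaGroup n m t r) = 𝐚 ^ (0 : ℤ) * 𝐛 ^ 0 by simp, nf_eq_nf_iff hm hrm htr]
  simp only [Nat.cast_zero, zero_add, Int.cast_zero, mul_comm y₁, natCast_eq_mul_iff hm,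
    and_assoc, exists_and_left, exists_eq_left', eq_comm (a := (0 : ZMod n)),
    ← ZMod.intCast_zmod_eq_zero_iff_dvd]
  push_cast
  rfl

theorem nf_pow_m_eq_nf_pow_t_iff :
    (𝐚 ^ x₂ * 𝐛 ^ y₂) ^ m = (𝐚 ^ x₁ * 𝐛 ^ y₁) ^ t ↔
      m ∣ t * y₁ ∧
        (x₂ : ℤ) * geomS ((r : ℤ) ^ y₂) m + t * y₂ - x₁ * geomS ((r : ℤ) ^ y₁) t
          - (t * y₁ / m : ℕ) * t ≡ 0 [ZMOD n] := by
  rw [← zpow_natCast 𝐚 x₁, ← zpow_natCast 𝐚 x₂, nf_pow, nf_pow, nf_eq_nf_iff hm hrm htr,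
    ← ZMod.intCast_eq_intCast_iff, Int.cast_zero]
  constructor
  · rintro ⟨k, hY, hX⟩
    obtain ⟨hdvd, hq⟩ := (natCast_eq_mul_iff (a := t * y₁) hm (k := y₂ + k)).mp <| by
      push_cast at hY ⊢
      linarith
    refine ⟨hdvd, ?_⟩
    rw [hq]
    push_cast at hX ⊢
    linear_combination hX
  · rintro ⟨hdvd, h⟩
    refine ⟨(t * y₁ / m : ℕ) - y₂, ?_, ?_⟩
    · have := (natCast_eq_mul_iff hm).mpr ⟨hdvd, rfl⟩
      push_cast at this ⊢
      linarith
    · push_cast at h ⊢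
      linear_combination h

theorem nf_mul_nf_mul_inv_eq_iff (hr : 0 < r) :
    (𝐚 ^ x₂ * 𝐛 ^ y₂) * (𝐚 ^ x₁ * 𝐛 ^ y₁) * (𝐚 ^ x₂ * 𝐛 ^ y₂)⁻¹ = (𝐚 ^ x₁ * 𝐛 ^ y₁) ^ r ↔
      m ∣ (r - 1) * y₁ ∧
        ((r : ℤ) ^ y₁ - 1) * x₂ + (geomS ((r : ℤ) ^ y₁) r - (r : ℤ) ^ y₂) * x₁
          + ((r - 1) * y₁ / m : ℕ) * t ≡ 0 [ZMOD n] := by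
  have hr1 : 1 ≤ r := hr
  have hY (k : ℤ) : ((y₁ * r + y₂ : ℕ) : ℤ) = (y₂ + y₁ : ℕ) + k * m ↔
      (((r - 1) * y₁ : ℕ) : ℤ) = k * m := by
    push_cast [Nat.cast_sub hr1]
    constructor <;> intro h <;> linarith
  have hpow (hdvd : m ∣ (r - 1) * y₁) : (r : ZMod n) ^ (y₁ * r) = (r : ZMod n) ^ y₁ := by
    obtain ⟨c, hc⟩ := hdvd
    have : y₁ * r = y₁ + m * c := by
      rw [← hc]
      zify [hr1]
      ring
    rw [this, pow_add, pow_mul, hrm, one_pow, mul_one]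
  rw [mul_inv_eq_iff_eq_mul, ← zpow_natCast 𝐚 x₁, ← zpow_natCast 𝐚 x₂, nf_mul, nf_pow, nf_mul,
    nf_eq_nf_iff hm hrm htr, ← ZMod.intCast_eq_intCast_iff, Int.cast_zero]
  constructor
  · rintro ⟨k, hk, hX⟩
    obtain ⟨hdvd, hq⟩ := (natCast_eq_mul_iff hm).mp ((hY k).mp hk)
    refine ⟨hdvd, ?_⟩
    rw [hq]
    push_cast [← pow_mul] at hX ⊢
    rw [hpow hdvd] at hX
    linear_combination -hX
  · rintro ⟨hdvd, h⟩
    refine ⟨_, (hY _).mpr ((natCast_eq_mul_iff hm).mpr ⟨hdvd, rfl⟩), ?_⟩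
    push_cast [← pow_mul] at h ⊢
    rw [hpow hdvd]
    linear_combination -h

end Faithful

end MetaGroup

theorem stmt_8_general (n m t r : ℕ) (hm : 0 < m) (hr : 0 < r)
    (htn : t ∣ n) (hrm : n ∣ r ^ m - 1) (htr : n ∣ t * (r - 1))
    (x₁ x₂ y₁ y₂ : ℕ) :
    (∃ σ : MetaGroup n m t r →* MetaGroup n m t r,
        σ (gena n m t r) = gena n m t r ^ x₁ * genb n m t r ^ y₁ ∧
        σ (genb n m t r) = gena n m t r ^ x₂ * genb n m t r ^ y₂) ↔
      (m ∣ Nat.gcd (Nat.gcd (r - 1) n) t * y₁ ∧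
       ((x₂ : ℤ) * geomS ((r : ℤ) ^ y₂) m + (t : ℤ) * (y₂ : ℤ)
          - (x₁ : ℤ) * geomS ((r : ℤ) ^ y₁) t
          - ((t * y₁ / m : ℕ) : ℤ) * (t : ℤ) ≡ 0 [ZMOD (n : ℤ)]) ∧
       (((r : ℤ) ^ y₁ - 1) * (x₂ : ℤ)
          + (geomS ((r : ℤ) ^ y₁) r - (r : ℤ) ^ y₂) * (x₁ : ℤ)
          + (((r - 1) * y₁ / m : ℕ) : ℤ) * (t : ℤ) ≡ 0 [ZMOD (n : ℤ)])) := by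
  have hrmℤ : (n : ℤ) ∣ (r : ℤ) ^ m - 1 := by
    simpa [Nat.cast_sub (Nat.one_le_pow _ _ hr)] using Int.natCast_dvd_natCast.mpr hrm
  have hrm' : (r : ZMod n) ^ m = 1 := by
    rw [← sub_eq_zero]
    exact_mod_cast (ZMod.intCast_zmod_eq_zero_iff_dvd _ _).mpr hrmℤ
  have htr' : (t : ZMod n) * r = t := by
    have := (ZMod.natCast_eq_zero_iff _ _).mpr htr
    push_cast [Nat.cast_sub (show 1 ≤ r from hr)] at this
    linear_combination this
  have hgcd : m ∣ Nat.gcd (Nat.gcd (r - 1) n) t * y₁ ↔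
      m ∣ n * y₁ ∧ m ∣ t * y₁ ∧ m ∣ (r - 1) * y₁ := by
    rw [← Nat.gcd_mul_right, ← Nat.gcd_mul_right, Nat.dvd_gcd_iff, Nat.dvd_gcd_iff]
    tauto
  rw [MetaGroup.exists_hom_iff, MetaGroup.nf_pow_n_eq_one_iff hm hrm' htr',
    MetaGroup.nf_pow_m_eq_nf_pow_t_iff hm hrm' htr',
    MetaGroup.nf_mul_nf_mul_inv_eq_iff hm hrm' htr' hr]
  constructor
  · rintro ⟨⟨hny, -⟩, ⟨hty, h₂⟩, hry, h₃⟩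
    exact ⟨hgcd.mpr ⟨hny, hty, hry⟩, h₂, h₃⟩
  · rintro ⟨h₁, h₂, h₃⟩
    obtain ⟨hny, hty, hry⟩ := hgcd.mp h₁
    have hdiv : t * (n * y₁ / m) = n * (t * y₁ / m) := by
      rw [← Nat.mul_div_assoc _ hny, ← Nat.mul_div_assoc _ hty, mul_left_comm]
    refine ⟨⟨hny, dvd_add (dvd_mul_of_dvd_right (dvd_geomS_pow_self hr htn hrmℤ h₁) _) ?_⟩,
      ⟨hty, h₂⟩, hry, h₃⟩
    exact_mod_cast hdiv ▸ dvd_mul_right n _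

theorem stmt_8 (n m t r : ℕ) (hn : 0 < n) (hm : 0 < m) (ht : 0 < t) (hr : 0 < r)
    (htn : t ∣ n) (hrm : n ∣ r ^ m - 1) (htr : n ∣ t * (r - 1))
    (x₁ x₂ y₁ y₂ : ℕ) :
    (∃ σ : MetaGroup n m t r →* MetaGroup n m t r,
        σ (gena n m t r) = gena n m t r ^ x₁ * genb n m t r ^ y₁ ∧
        σ (genb n m t r) = gena n m t r ^ x₂ * genb n m t r ^ y₂) ↔
      (m ∣ Nat.gcd (Nat.gcd (r - 1) n) t * y₁ ∧
       ((x₂ : ℤ) * geomS ((r : ℤ) ^ y₂) m + (t : ℤ) * (y₂ : ℤ)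
          - (x₁ : ℤ) * geomS ((r : ℤ) ^ y₁) t
          - ((t * y₁ / m : ℕ) : ℤ) * (t : ℤ) ≡ 0 [ZMOD (n : ℤ)]) ∧
       (((r : ℤ) ^ y₁ - 1) * (x₂ : ℤ)
          + (geomS ((r : ℤ) ^ y₁) r - (r : ℤ) ^ y₂) * (x₁ : ℤ)
          + (((r - 1) * y₁ / m : ℕ) : ℤ) * (t : ℤ) ≡ 0 [ZMOD (n : ℤ)])) :=
  stmt_8_general n m t r hm hr htn hrm htr x₁ x₂ y₁ y₂
end

section
/- Let p be a prime dividing n but not dividing r−1, and let α_p = deg_p(n). Let x₁, x₂, y₁, y₂ be nonnegative integers such that m divides t·y₁ and m divides (r−1)·y₁, and such that p does not divide (r^{y₁}−1)·x₂ − (r^{y₂}−1)·x₁. Then p ≠ 2, and the two congruences x₂·[m]_{r^{y₂}} + t·y₂ − x₁·[t]_{r^{y₁}} − (t·y₁/m)·t ≡ 0 (mod p^{α_p}) and (r^{y₁}−1)·x₂ + ([r]_{r^{y₁}} − r^{y₂})·x₁ + ((r−1)·y₁/m)·t ≡ 0 (mod p^{α_p}) hold simultaneously if and only if r^{y₁}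 ≡ 1 (mod p^{α_p}) and r^{y₂} ≡ r (mod p^{α_p}). -/
open Finset IsLocalRing

@[push_cast]
theorem Int.cast_geomS {R : Type*} [Ring R] (s : ℤ) (k : ℕ) :
    ((geomS s k : ℤ) : R) = ∑ i ∈ Finset.range k, (s : R) ^ i := by
  simp [geomS]

theorem Nat.two_dvd_sub_one_of_two_dvd_pow_sub_one {r m : ℕ} (hr : 0 < r) (hm : 0 < m)
    (h : 2 ∣ r ^ m - 1) : 2 ∣ r - 1 := by
  by_contra h'
  have : 2 ∣ r ^ m := dvd_pow (by omega) hm.ne'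
  have := Nat.one_le_pow m r hr
  omega

theorem ZMod.isUnit_intCast_iff_not_dvd_pow {p d : ℕ} (hp : p.Prime) (hd : 0 < d) (a : ℤ) :
    IsUnit (a : ZMod (p ^ d)) ↔ ¬ (p : ℤ) ∣ a := by
  have : NeZero (p ^ d) := ⟨pow_ne_zero d hp.ne_zero⟩
  rw [← ZMod.natCast_zmod_val (a : ZMod (p ^ d)), ZMod.isUnit_natCast_iff_not_dvd_pow hp hd,
    ← Int.natCast_dvd_natCast, ZMod.val_intCast, Int.emod_def, dvd_sub_left]
  exact Dvd.dvd.mul_right (by exact_mod_cast dvd_pow_self p hd.ne') _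

theorem ZMod.isLocalRing_prime_pow {p d : ℕ} (hp : p.Prime) (hd : 0 < d) :
    IsLocalRing (ZMod (p ^ d)) := by
  have : Fact (1 < p ^ d) := ⟨Nat.one_lt_pow hd.ne' hp.one_lt⟩
  have mem_nonunits (x : ZMod (p ^ d)) : x ∈ nonunits _ ↔ p ∣ x.val := by
    rw [mem_nonunits_iff, ← ZMod.natCast_zmod_val x, ZMod.isUnit_natCast_iff_not_dvd_pow hp hd,
      not_not, ZMod.natCast_zmod_val]
  refine .of_nonunits_add fun a b ha hb => ?_
  rw [mem_nonunits] at ha hb ⊢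
  rw [ZMod.val_add, Nat.dvd_mod_iff (dvd_pow_self p hd.ne')]
  exact dvd_add ha hb

section

variable {R : Type*} [CommRing R]

theorem geom_sum_eq_zero_of_pow_eq_one {a : R} {k : ℕ} (ha : IsUnit (a - 1)) (h : a ^ k = 1) :
    ∑ i ∈ range k, a ^ i = 0 :=
  ha.mul_right_eq_zero.mp (by rw [mul_geom_sum, h, sub_self])

variable [IsLocalRing R]

theorem IsLocalRing.eq_one_of_pow_eq_one {a : R} {k : ℕ} (hk : IsUnit (k : R))
    (h : a ^ k = 1) (ha : ¬ IsUnit (a - 1)) : a = 1 := by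
  have ha1 : residue R a = 1 := by
    rwa [← sub_eq_zero, ← map_one (residue R), ← map_sub, residue_eq_zero_iff]
  have hS : IsUnit (∑ i ∈ range k, a ^ i) := by
    rw [← residue_ne_zero_iff_isUnit, map_sum]
    simpa [ha1] using (hk.map (residue R)).ne_zero
  rw [← sub_eq_zero, ← hS.mul_left_eq_zero, mul_geom_sum, h, sub_self]

theorem IsLocalRing.eq_one_and_eq_of_geom_sum_relation {a b x₁ x₂ : R} {k : ℕ}
    (hk : IsUnit (k : R)) (ha : a ^ k = 1) (hD : IsUnit ((a - 1) * x₂ - (b - 1) * x₁))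
    (h : (a - 1) * x₂ + (∑ i ∈ range (k + 1), a ^ i - b) * x₁ = 0) :
    a = 1 ∧ b = k + 1 := by
  by_cases hu : IsUnit (a - 1)
  · have hS : ∑ i ∈ range (k + 1), a ^ i = 1 := by
      rw [sum_range_succ, geom_sum_eq_zero_of_pow_eq_one hu ha, ha, zero_add]
    have hD0 : (a - 1) * x₂ - (b - 1) * x₁ = 0 := by linear_combination h - x₁ * hS
    exact absurd (hD0 ▸ hD) not_isUnit_zero
  obtain rfl := eq_one_of_pow_eq_one hk ha hu
  have hx₁ : IsUnit x₁ := (by simpa using hD : IsUnit (b - 1) ∧ IsUnit x₁).2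
  refine ⟨rfl, (sub_eq_zero.mp (hx₁.mul_left_eq_zero.mp ?_)).symm⟩
  simpa using h

theorem IsLocalRing.geom_sum_relations_iff {a b x₁ x₂ y c₁ c₂ : R} {k m t : ℕ}
    (hk : IsUnit (k : R)) (hm : ((k : R) + 1) ^ m = 1) (ht : (t : R) = 0) (ha : a ^ k = 1)
    (hD : IsUnit ((a - 1) * x₂ - (b - 1) * x₁)) :
    (x₂ * ∑ i ∈ range m, b ^ i + t * y - x₁ * ∑ i ∈ range t, a ^ i - c₁ * t = 0 ∧
        (a - 1) * x₂ + (∑ i ∈ range (k + 1), a ^ i - b) * x₁ + c₂ * t = 0) ↔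
      a = 1 ∧ b = k + 1 := by
  constructor
  · rintro ⟨-, h⟩
    exact eq_one_and_eq_of_geom_sum_relation hk ha hD (by simpa [ht] using h)
  · rintro ⟨rfl, rfl⟩
    have hS : ∑ i ∈ range m, ((k : R) + 1) ^ i = 0 :=
      geom_sum_eq_zero_of_pow_eq_one (by simpa using hk) hm
    simp [hS, ht]

end

theorem stmt_13_general (n m t r : ℕ) (hm : 0 < m) (hr : 0 < r)
    (hrm : n ∣ r ^ m - 1) (htr : n ∣ t * (r - 1))
    (p α : ℕ) (hp : p.Prime) (hpn : p ∣ n) (hpr : ¬ p ∣ (r - 1))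
    (hα1 : p ^ α ∣ n)
    (x₁ x₂ y₁ y₂ : ℕ) (hry : m ∣ (r - 1) * y₁)
    (hinj : ¬ (p : ℤ) ∣ (((r : ℤ) ^ y₁ - 1) * (x₂ : ℤ) - ((r : ℤ) ^ y₂ - 1) * (x₁ : ℤ))) :
    p ≠ 2 ∧
    ((((x₂ : ℤ) * geomS ((r : ℤ) ^ y₂) m + (t : ℤ) * (y₂ : ℤ)
          - (x₁ : ℤ) * geomS ((r : ℤ) ^ y₁) t
          - ((t * y₁ / m : ℕ) : ℤ) * (t : ℤ) ≡ 0 [ZMOD (p : ℤ) ^ α]) ∧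
      (((r : ℤ) ^ y₁ - 1) * (x₂ : ℤ)
          + (geomS ((r : ℤ) ^ y₁) r - (r : ℤ) ^ y₂) * (x₁ : ℤ)
          + (((r - 1) * y₁ / m : ℕ) : ℤ) * (t : ℤ) ≡ 0 [ZMOD (p : ℤ) ^ α])) ↔
     (((r : ℤ) ^ y₁ ≡ 1 [ZMOD (p : ℤ) ^ α]) ∧
      ((r : ℤ) ^ y₂ ≡ (r : ℤ) [ZMOD (p : ℤ) ^ α]))) := by
  refine ⟨fun hp2 => hpr (hp2 ▸ Nat.two_dvd_sub_one_of_two_dvd_pow_sub_one hr hm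
    (hp2 ▸ hpn.trans hrm)), ?_⟩
  rcases Nat.eq_zero_or_pos α with rfl | hα
  · simp [Int.modEq_one]
  obtain ⟨k, rfl⟩ : ∃ k, r = k + 1 := ⟨r - 1, by omega⟩
  rw [Nat.add_sub_cancel] at htr hpr hry ⊢
  have := ZMod.isLocalRing_prime_pow hp hα
  have hk : IsUnit (k : ZMod (p ^ α)) := (ZMod.isUnit_natCast_iff_not_dvd_pow hp hα).mpr hpr
  have hr_pow : ((k : ZMod (p ^ α)) + 1) ^ m = 1 := by
    have h := (ZMod.natCast_eq_zero_iff _ (p ^ α)).mpr (hα1.trans hrm)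
    rw [Nat.cast_sub (Nat.one_le_pow _ _ hr)] at h
    push_cast at h
    exact sub_eq_zero.mp h
  have ht : (t : ZMod (p ^ α)) = 0 :=
    hk.mul_left_eq_zero.mp (by exact_mod_cast (ZMod.natCast_eq_zero_iff _ _).mpr (hα1.trans htr))
  have ha : (((k : ZMod (p ^ α)) + 1) ^ y₁) ^ k = 1 := by
    obtain ⟨c, hc⟩ := hry
    rw [← pow_mul, mul_comm, hc, pow_mul, hr_pow, one_pow]
  rw [← ZMod.isUnit_intCast_iff_not_dvd_pow hp hα] at hinj
  rw [show (p : ℤ) ^ α = ((p ^ α : ℕ) : ℤ) by push_cast; rfl]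
  simp only [← ZMod.intCast_eq_intCast_iff]
  push_cast at hinj ⊢
  exact IsLocalRing.geom_sum_relations_iff hk hr_pow ht ha hinj

theorem stmt_13 (n m t r : ℕ) (hn : 0 < n) (hm : 0 < m) (ht : 0 < t) (hr : 0 < r)
    (htn : t ∣ n) (hrm : n ∣ r ^ m - 1) (htr : n ∣ t * (r - 1))
    (p α : ℕ) (hp : p.Prime) (hpn : p ∣ n) (hpr : ¬ p ∣ (r - 1))
    (hα1 : p ^ α ∣ n) (hα2 : ¬ p ^ (α + 1) ∣ n)
    (x₁ x₂ y₁ y₂ : ℕ) (hty : m ∣ t * y₁) (hry : m ∣ (r - 1) * y₁)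
    (hinj : ¬ (p : ℤ) ∣ (((r : ℤ) ^ y₁ - 1) * (x₂ : ℤ) - ((r : ℤ) ^ y₂ - 1) * (x₁ : ℤ))) :
    p ≠ 2 ∧
    ((((x₂ : ℤ) * geomS ((r : ℤ) ^ y₂) m + (t : ℤ) * (y₂ : ℤ)
          - (x₁ : ℤ) * geomS ((r : ℤ) ^ y₁) t
          - ((t * y₁ / m : ℕ) : ℤ) * (t : ℤ) ≡ 0 [ZMOD (p : ℤ) ^ α]) ∧
      (((r : ℤ) ^ y₁ - 1) * (x₂ : ℤ)
          + (geomS ((r : ℤ) ^ y₁) r - (r : ℤ) ^ y₂) * (x₁ : ℤ)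
          + (((r - 1) * y₁ / m : ℕ) : ℤ) * (t : ℤ) ≡ 0 [ZMOD (p : ℤ) ^ α])) ↔
     (((r : ℤ) ^ y₁ ≡ 1 [ZMOD (p : ℤ) ^ α]) ∧
      ((r : ℤ) ^ y₂ ≡ (r : ℤ) [ZMOD (p : ℤ) ^ α]))) :=
  stmt_13_general n m t r hm hr hrm htr p α hp hpn hpr hα1 x₁ x₂ y₁ y₂ hry hinj
end

section
/- Assume 2 divides n and set α₂ = deg₂(n), β₂ = deg₂(m), γ₂ = deg₂(t), δ₂ = deg₂(r−1), ε = deg₂(r+1). Suppose δ₂ = 1 < α₂ and γ₂ > 1. Let x₁, x₂, y₁, y₂ be nonnegative integers with gcd(gcd(r−1,n), t)·y₁ ≡ 0 (mod m) and x₁y₂ − x₂y₁ odd. Then the two congruences x₂·[m]_{r^{y₂}} + t·y₂ − x₁·[t]_{r^{y₁}} − (t·y₁/m)·t ≡ 0 (mod 2^{α₂}) and (r^{y₁}−1)·x₂ + ([r]_{r^{y₁}} − r^{y₂})·x₁ + ((r−1)·y₁/m)·t ≡ 0 (mod 2^{α₂}) hold simultaneously if and only if 2 divides y₁, deg₂(x₂)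 ≥ α₂ − β₂ − ε + 1, and 2^{ε}·(y₁ − y₂ + 1) ≡ 2·t·y₁/m (mod 2^{α₂}). -/
/-!
Write `v` for the 2-adic valuation. As `v(r - 1) = 1`, `r ≡ 3 (mod 4)`, and lifting the exponent
for `-r ≡ 1 (mod 4)` gives `v(r^k - 1) = ε + v(k)` for even `k`, while `v(r^k - 1) = 1` for odd
`k`. In particular `m` is even and `α₂ ≤ ε + β₂`, since `2^α₂ ∣ r^m - 1`.

If `y₁` is odd, the second congruence read modulo 4 says `2 (x₁ y₂ - x₂ y₁) ≡ 0`, which is false.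

If `y₁` is even, then `x₁` and `y₂` are odd, and `m ∣ (r - 1) y₁` gives `v(y₁) ≥ β₂ - 1`, so
`S = r^y₁ - 1` has `v(S) = ε + v(y₁) ≥ α₂ - 1` and `[k]_{r^y₁} ≡ k + S·C(k, 2) (mod 2^α₂)`.
The first congruence then collapses to `x₂ [m]_{r^y₂} ≡ 0`, where `v([m]_{r^y₂}) = ε + β₂ - 1`.
Given it, the second collapses to `(r - r^y₂) x₁ + (2 t y₁ / m - 2^ε y₁) ≡ 0`. Here `(r - r^y₂) x₁`
and `2^ε (y₂ - 1)` both have valuation `ε + v(y₂ - 1)`, integers of equal valuation `j` agree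
modulo `2^(j+1)`, and the bracket is divisible by `2^(α₂-1)`; so one may replace the other.
-/

open Finset

lemma geomS_mul_sub_one (s : ℤ) (k : ℕ) : geomS s k * (s - 1) = s ^ k - 1 :=
  geom_sum_mul s k

lemma geomS_modEq_sq (s : ℤ) (k : ℕ) :
    geomS s k ≡ k + (s - 1) * k.choose 2 [ZMOD (s - 1) ^ 2] := by
  induction k with
  | zero => simp [geomS]
  | succ k ih =>
    calc geomS s (k + 1) = s * geomS s k + 1 := by
          simp only [geomS, sum_range_succ', pow_zero, pow_succ', mul_sum]
      _ ≡ s * (k + (s - 1) * k.choose 2) + 1 [ZMOD (s - 1) ^ 2] := by gcongr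
      _ ≡ (k + 1 : ℕ) + (s - 1) * (k + 1).choose 2 [ZMOD (s - 1) ^ 2] :=
          Int.modEq_iff_dvd.2 ⟨-k.choose 2, by
            rw [Nat.choose_succ_succ', Nat.choose_one_right]; push_cast; ring⟩

lemma geomS_modEq_two_pow {s : ℤ} {k : ℕ} (hs : 2 ^ k ∣ s - 1) (hk : 1 ≤ k) (n : ℕ) :
    geomS s n ≡ n + (s - 1) * n.choose 2 [ZMOD 2 ^ (k + 1)] :=
  (geomS_modEq_sq s n).of_dvd <| (pow_dvd_pow 2 (by omega : k + 1 ≤ k * 2)).trans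
    (by rw [pow_mul]; exact pow_dvd_pow_of_dvd hs 2)

lemma Int.ModEq.geomS {n a b : ℤ} (h : a ≡ b [ZMOD n]) (k : ℕ) :
    geomS a k ≡ geomS b k [ZMOD n] :=
  Int.ModEq.sum fun i _ => h.pow i

lemma geomS_neg_one_of_odd {k : ℕ} (hk : Odd k) : geomS (-1) k = 1 := by
  simp [geomS, neg_one_geom_sum, Nat.not_even_iff_odd.2 hk]

lemma two_dvd_choose_two {t : ℕ} (ht : 4 ∣ t) : 2 ∣ t.choose 2 := by
  obtain ⟨s, rfl⟩ := ht
  rw [Nat.choose_two_right, show 4 * s * (4 * s - 1) = 2 * (2 * s * (4 * s - 1)) by ring,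
    Nat.mul_div_cancel_left _ two_pos]
  exact dvd_mul_of_dvd_left (dvd_mul_right 2 s) _

lemma odd_choose_two {r : ℕ} (hr : 4 ∣ (r : ℤ) + 1) : Odd (r.choose 2) := by
  obtain ⟨w, rfl⟩ : ∃ w, r = 4 * w + 3 := ⟨r / 4, by omega⟩
  rw [Nat.choose_two_right, show 4 * w + 3 - 1 = 2 * (2 * w + 1) by omega,
    show (4 * w + 3) * (2 * (2 * w + 1)) = 2 * ((4 * w + 3) * (2 * w + 1)) by ring,
    Nat.mul_div_cancel_left _ two_pos]
  exact Nat.odd_mul.2 ⟨⟨2 * w + 1, by ring⟩, ⟨w, by ring⟩⟩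

lemma emultiplicity_two_natCast_eq {a j : ℕ} (h₁ : 2 ^ j ∣ a) (h₂ : ¬ 2 ^ (j + 1) ∣ a) :
    emultiplicity 2 (a : ℤ) = j := by
  rw [show (2 : ℤ) = ((2 : ℕ) : ℤ) from rfl, Int.natCast_emultiplicity]
  exact emultiplicity_eq_coe.2 ⟨h₁, h₂⟩

lemma emultiplicity_two_eq_zero_of_odd {u : ℤ} (hu : Odd u) : emultiplicity 2 u = 0 :=
  emultiplicity_eq_zero.2 (by rwa [← even_iff_two_dvd, Int.not_even_iff_odd])

lemma two_pow_dvd_mul_iff_of_emultiplicity_eq {a b c : ℤ} {j : ℕ}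
    (h : emultiplicity 2 a = emultiplicity 2 b) : 2 ^ j ∣ a * c ↔ 2 ^ j ∣ b * c := by
  simp only [pow_dvd_iff_le_emultiplicity, emultiplicity_mul Int.prime_two, h]

lemma two_pow_dvd_iff_of_emultiplicity_eq {a b : ℤ} {j : ℕ}
    (h : emultiplicity 2 a = emultiplicity 2 b) : 2 ^ j ∣ a ↔ 2 ^ j ∣ b := by
  simp only [pow_dvd_iff_le_emultiplicity, h]

lemma two_pow_succ_dvd_sub_of_emultiplicity_eq {a b : ℤ} {k : ℕ}
    (h : emultiplicity 2 a = emultiplicity 2 b) (ha : 2 ^ k ∣ a) : 2 ^ (k + 1) ∣ a - b := by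
  obtain ⟨a', rfl⟩ := ha
  obtain ⟨b', rfl⟩ := (two_pow_dvd_iff_of_emultiplicity_eq h).1 ⟨a', rfl⟩
  have hpar : 2 ∣ a' ↔ 2 ∣ b' := by
    simpa only [pow_succ, mul_dvd_mul_iff_left (by positivity : (2 : ℤ) ^ k ≠ 0)]
      using two_pow_dvd_iff_of_emultiplicity_eq (j := k + 1) h
  rw [pow_succ, ← mul_sub]
  exact mul_dvd_mul_left _ (even_iff_two_dvd.1 (Int.even_sub.2 (by simpa only [even_iff_two_dvd])))

lemma two_pow_succ_dvd_add_iff_of_emultiplicity_eq {a b c : ℤ} {k : ℕ}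
    (h : emultiplicity 2 a = emultiplicity 2 b) (hc : 2 ^ k ∣ c) :
    2 ^ (k + 1) ∣ a + c ↔ 2 ^ (k + 1) ∣ b + c := by
  by_cases ha : 2 ^ k ∣ a
  · exact dvd_iff_dvd_of_dvd_sub (by simpa using two_pow_succ_dvd_sub_of_emultiplicity_eq h ha)
  · have hlow {x : ℤ} (hx : 2 ^ (k + 1) ∣ x + c) : 2 ^ k ∣ x :=
      (dvd_add_left hc).1 ((pow_dvd_pow 2 k.le_succ).trans hx)
    exact iff_of_false (fun h' => ha (hlow h'))
      (fun h' => ha ((two_pow_dvd_iff_of_emultiplicity_eq h).2 (hlow h')))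

section ThreeModFour

variable {r : ℤ}

lemma pow_modEq_four (hr : 4 ∣ r + 1) (k : ℕ) : r ^ k ≡ 1 - 2 * k [ZMOD 4] := by
  induction k with
  | zero => simp
  | succ k ih =>
    calc r ^ (k + 1) = r ^ k * r := pow_succ r k
      _ ≡ (1 - 2 * k) * (-1) [ZMOD 4] := ih.mul (Int.modEq_iff_dvd.2 (by omega))
      _ ≡ 1 - 2 * (k + 1 : ℕ) [ZMOD 4] := Int.modEq_iff_dvd.2 ⟨-k, by push_cast; ring⟩

lemma even_of_four_dvd_pow_sub_one (hr : 4 ∣ r + 1) {k : ℕ} (h : 4 ∣ r ^ k - 1) : Even k := by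
  have h' := pow_modEq_four hr k
  unfold Int.ModEq at h'
  rw [Nat.even_iff]
  omega

lemma emultiplicity_pow_sub_one_of_even (hr : 4 ∣ r + 1) {k : ℕ} (hk : Even k) :
    emultiplicity 2 (r ^ k - 1) = emultiplicity 2 (r + 1) + emultiplicity 2 (k : ℤ) := by
  have h := Int.two_pow_sub_pow' (x := -r) (y := 1) k (by omega) (by omega)
  rwa [hk.neg_pow, one_pow, show -r - 1 = -(r + 1) by ring, emultiplicity_neg] at h

lemma emultiplicity_pow_sub_one_of_odd (hr : 4 ∣ r + 1) {k : ℕ} (hk : Odd k) :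
    emultiplicity 2 (r ^ k - 1) = 1 := by
  have h := pow_modEq_four hr k
  obtain ⟨j, rfl⟩ := hk
  rw [show (1 : ℕ∞) = (1 : ℕ) from rfl, emultiplicity_eq_coe]
  unfold Int.ModEq at h
  push_cast at h
  constructor <;> norm_num <;> omega

lemma emultiplicity_geomS_pow_add_one (hr : 4 ∣ r + 1) {y m : ℕ} (hy : Odd y) (hm : Even m) :
    emultiplicity 2 (geomS (r ^ y) m) + 1 =
      emultiplicity 2 (r + 1) + emultiplicity 2 (m : ℤ) := by
  have h := congrArg (emultiplicity 2) (geomS_mul_sub_one (r ^ y) m)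
  rwa [emultiplicity_mul Int.prime_two, emultiplicity_pow_sub_one_of_odd hr hy, ← pow_mul,
    emultiplicity_pow_sub_one_of_even hr (hm.mul_left y), Nat.cast_mul,
    emultiplicity_mul Int.prime_two, emultiplicity_two_eq_zero_of_odd hy.natCast, zero_add] at h

lemma two_pow_dvd_pow_sub_one_mul {y β ε j : ℕ} {x : ℤ} (hr : 4 ∣ r + 1)
    (hε : emultiplicity 2 (r + 1) = ε) (hy : Even y) (hyβ : 2 ^ β ∣ 2 * (y : ℤ))
    (h : 2 ^ (j + 1) ∣ 2 ^ (β + ε) * x) : 2 ^ j ∣ (r ^ y - 1) * x := by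
  have hv : emultiplicity 2 (r ^ y - 1) = emultiplicity 2 ((2 : ℤ) ^ ε * y) := by
    rw [emultiplicity_pow_sub_one_of_even hr hy, hε, emultiplicity_mul Int.prime_two,
      emultiplicity_pow_self_of_prime Int.prime_two]
  rw [two_pow_dvd_mul_iff_of_emultiplicity_eq hv, ← mul_dvd_mul_iff_left (two_ne_zero' ℤ),
    ← pow_succ']
  obtain ⟨c, hc⟩ := hyβ
  exact h.trans ⟨c, by rw [pow_add]; linear_combination (2 ^ ε * x) * hc⟩

end ThreeModFour

lemma not_second_modEq_zero_of_odd {r t x₁ x₂ y₁ y₂ α : ℕ} (hr : 4 ∣ (r : ℤ) + 1) (ht : 4 ∣ t)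
    (hα : 2 ≤ α) (hy₁ : Odd y₁) (hodd : ¬ (2 : ℤ) ∣ x₁ * y₂ - x₂ * y₁) (q : ℤ) :
    ¬ ((r : ℤ) ^ y₁ - 1) * x₂ + (geomS ((r : ℤ) ^ y₁) r - (r : ℤ) ^ y₂) * x₁ + q * t
      ≡ 0 [ZMOD 2 ^ α] := by
  have hgeom : geomS ((r : ℤ) ^ y₁) r ≡ 1 [ZMOD 4] := by
    rw [← geomS_neg_one_of_odd (show Odd r by rw [Nat.odd_iff]; omega)]
    refine ((pow_modEq_four hr y₁).trans (Int.modEq_iff_dvd.2 ?_)).geomS r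
    obtain ⟨j, rfl⟩ := hy₁
    exact ⟨j, by push_cast; ring⟩
  have hmod : ((r : ℤ) ^ y₁ - 1) * x₂ + (geomS ((r : ℤ) ^ y₁) r - (r : ℤ) ^ y₂) * x₁ + q * t
      ≡ 2 * (x₁ * y₂ - x₂ * y₁) [ZMOD 4] :=
    calc _ ≡ ((1 - 2 * y₁) - 1) * x₂ + (1 - (1 - 2 * y₂)) * x₁ + q * 0 [ZMOD 4] := by
          gcongr
          · exact pow_modEq_four hr y₁
          · exact pow_modEq_four hr y₂
          · exact Int.modEq_zero_iff_dvd.2 (by exact_mod_cast ht)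
      _ = 2 * (x₁ * y₂ - x₂ * y₁) := by ring
  intro h
  have h4 : (2 : ℤ) * 2 ∣ _ := (pow_dvd_pow 2 hα).trans (Int.modEq_zero_iff_dvd.1 h)
  exact hodd ((mul_dvd_mul_iff_left two_ne_zero).1 ((dvd_iff_dvd_of_dvd_sub hmod.dvd).2 h4))

lemma first_modEq_zero_iff_of_even {r m t x₁ x₂ y₁ y₂ k β ε : ℕ} {q : ℤ}
    (hr : 4 ∣ (r : ℤ) + 1) (hε : emultiplicity 2 ((r : ℤ) + 1) = ε)
    (hβ : emultiplicity 2 (m : ℤ) = β) (hm : Even m) (hy₂ : Odd y₂) (hk : 1 ≤ k)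
    (hS : 2 ^ k ∣ (r : ℤ) ^ y₁ - 1) (ht : 2 ∣ t.choose 2)
    (hrest : 2 ^ (k + 1) ∣ (t : ℤ) * (y₂ - x₁) - q * t) :
    (x₂ : ℤ) * geomS ((r : ℤ) ^ y₂) m + t * y₂ - x₁ * geomS ((r : ℤ) ^ y₁) t - q * t
      ≡ 0 [ZMOD 2 ^ (k + 1)] ↔ 2 ^ (k + 1 + 1) ∣ 2 ^ (β + ε) * x₂ := by
  have hSC : ((r : ℤ) ^ y₁ - 1) * t.choose 2 ≡ 0 [ZMOD 2 ^ (k + 1)] :=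
    Int.modEq_zero_iff_dvd.2 (pow_succ (2 : ℤ) k ▸ mul_dvd_mul hS (by exact_mod_cast ht))
  have hred : (x₂ : ℤ) * geomS ((r : ℤ) ^ y₂) m + t * y₂ - x₁ * geomS ((r : ℤ) ^ y₁) t - q * t
      ≡ x₂ * geomS ((r : ℤ) ^ y₂) m [ZMOD 2 ^ (k + 1)] :=
    calc _ ≡ x₂ * geomS ((r : ℤ) ^ y₂) m + t * y₂
          - x₁ * (t + ((r : ℤ) ^ y₁ - 1) * t.choose 2) - q * t [ZMOD 2 ^ (k + 1)] := by
          gcongr; exact geomS_modEq_two_pow hS hk t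
      _ = x₂ * geomS ((r : ℤ) ^ y₂) m + ((t : ℤ) * (y₂ - x₁) - q * t)
          - x₁ * (((r : ℤ) ^ y₁ - 1) * t.choose 2) := by ring
      _ ≡ x₂ * geomS ((r : ℤ) ^ y₂) m + 0 - x₁ * 0 [ZMOD 2 ^ (k + 1)] := by
          gcongr; exact Int.modEq_zero_iff_dvd.2 hrest
      _ = x₂ * geomS ((r : ℤ) ^ y₂) m := by ring
  have hgeom := emultiplicity_geomS_pow_add_one hr hy₂ hm
  rw [hε, hβ] at hgeom
  rw [Int.modEq_zero_iff_dvd, ← dvd_iff_dvd_of_dvd_sub hred.dvd, ← Int.natCast_dvd_natCast]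
  push_cast
  rw [pow_dvd_iff_le_emultiplicity, pow_dvd_iff_le_emultiplicity, emultiplicity_mul Int.prime_two,
    emultiplicity_mul Int.prime_two, emultiplicity_pow_self_of_prime Int.prime_two,
    Nat.cast_add β ε, add_comm (β : ℕ∞), ← hgeom, Nat.cast_succ (k + 1),
    add_right_comm _ 1, add_comm (emultiplicity 2 _)]
  exact (ENat.add_le_add_iff_right ENat.one_ne_top).symm

lemma second_modEq_zero_iff_of_even {r t x₁ x₂ y₁ y₂ k ε : ℕ} {q₁ q₂ : ℤ}
    (hr : 4 ∣ (r : ℤ) + 1) (hε : emultiplicity 2 ((r : ℤ) + 1) = ε) (hk : 1 ≤ k)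
    (hy₁ : Even y₁) (hx₁ : Odd x₁) (hy₂ : Odd y₂) (hS : 2 ^ k ∣ (r : ℤ) ^ y₁ - 1)
    (hSx : 2 ^ (k + 1) ∣ ((r : ℤ) ^ y₁ - 1) * x₂)
    (hq₁ : 2 ^ k ∣ 2 * q₁) (hq₂ : 2 ^ (k + 1) ∣ q₂ * t - 2 * q₁) :
    ((r : ℤ) ^ y₁ - 1) * x₂ + (geomS ((r : ℤ) ^ y₁) r - (r : ℤ) ^ y₂) * x₁ + q₂ * t
      ≡ 0 [ZMOD 2 ^ (k + 1)] ↔ 2 ^ ε * ((y₁ : ℤ) - y₂ + 1) ≡ 2 * q₁ [ZMOD 2 ^ (k + 1)] := by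
  have hSv : emultiplicity 2 ((r : ℤ) ^ y₁ - 1) = emultiplicity 2 ((2 : ℤ) ^ ε * y₁) := by
    rw [emultiplicity_pow_sub_one_of_even hr hy₁, hε, emultiplicity_mul Int.prime_two,
      emultiplicity_pow_self_of_prime Int.prime_two]
  have hSCx : 2 ^ (k + 1) ∣ ((r : ℤ) ^ y₁ - 1) * r.choose 2 * x₁ + 2 ^ ε * y₁ := by
    refine sub_neg_eq_add _ (2 ^ ε * (y₁ : ℤ)) ▸
      two_pow_succ_dvd_sub_of_emultiplicity_eq ?_ ((hS.mul_right _).mul_right _)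
    rw [emultiplicity_neg, ← hSv, emultiplicity_mul Int.prime_two, emultiplicity_mul Int.prime_two,
      emultiplicity_two_eq_zero_of_odd (odd_choose_two hr).natCast,
      emultiplicity_two_eq_zero_of_odd hx₁.natCast, add_zero, add_zero]
  obtain ⟨w, rfl⟩ : ∃ w, y₂ = w + 1 := ⟨y₂ - 1, by obtain ⟨j, rfl⟩ := hy₂; omega⟩
  have hw : Even w := by simpa [Nat.odd_add_one, Nat.not_odd_iff_even] using hy₂
  have hPv : emultiplicity 2 (((r : ℤ) - r ^ (w + 1)) * x₁) =
      emultiplicity 2 ((2 : ℤ) ^ ε * w) := by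
    rw [show ((r : ℤ) - r ^ (w + 1)) * x₁ = -(r * x₁ * (r ^ w - 1)) by ring, emultiplicity_neg,
      emultiplicity_mul Int.prime_two, emultiplicity_mul Int.prime_two,
      emultiplicity_two_eq_zero_of_odd (by rw [Int.odd_iff]; omega),
      emultiplicity_two_eq_zero_of_odd hx₁.natCast, emultiplicity_pow_sub_one_of_even hr hw, hε,
      emultiplicity_mul Int.prime_two, emultiplicity_pow_self_of_prime Int.prime_two,
      zero_add, zero_add]
  have hc : 2 ^ k ∣ 2 * q₁ - 2 ^ ε * y₁ :=
    dvd_sub hq₁ ((two_pow_dvd_iff_of_emultiplicity_eq hSv).1 hS)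
  have hred : ((r : ℤ) ^ y₁ - 1) * x₂ + (geomS ((r : ℤ) ^ y₁) r - (r : ℤ) ^ (w + 1)) * x₁
      + q₂ * t ≡ ((r : ℤ) - r ^ (w + 1)) * x₁ + (2 * q₁ - 2 ^ ε * y₁) [ZMOD 2 ^ (k + 1)] :=
    calc _ ≡ ((r : ℤ) ^ y₁ - 1) * x₂ + ((r + ((r : ℤ) ^ y₁ - 1) * r.choose 2)
          - (r : ℤ) ^ (w + 1)) * x₁ + q₂ * t [ZMOD 2 ^ (k + 1)] := by
          gcongr; exact geomS_modEq_two_pow hS hk r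
      _ = ((r : ℤ) ^ y₁ - 1) * x₂ + (((r : ℤ) ^ y₁ - 1) * r.choose 2 * x₁ + 2 ^ ε * y₁)
          + (q₂ * t - 2 * q₁) + (((r : ℤ) - r ^ (w + 1)) * x₁ + (2 * q₁ - 2 ^ ε * y₁)) := by
          ring
      _ ≡ 0 + 0 + 0 + (((r : ℤ) - r ^ (w + 1)) * x₁ + (2 * q₁ - 2 ^ ε * y₁))
          [ZMOD 2 ^ (k + 1)] := by
          gcongr <;> exact Int.modEq_zero_iff_dvd.2 ‹_›
      _ = _ := by ring
  rw [Int.modEq_zero_iff_dvd, ← dvd_iff_dvd_of_dvd_sub hred.dvd,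
    two_pow_succ_dvd_add_iff_of_emultiplicity_eq hPv hc, Int.modEq_iff_dvd,
    show (2 : ℤ) ^ ε * w + (2 * q₁ - 2 ^ ε * y₁) = 2 * q₁ - 2 ^ ε * (y₁ - (w + 1 : ℕ) + 1) by
      push_cast; ring]

lemma modEq_zero_iff_of_even {r m t x₁ x₂ y₁ y₂ k β γ ε : ℕ} {q₁ q₂ : ℤ}
    (hr : 4 ∣ (r : ℤ) + 1) (hε : emultiplicity 2 ((r : ℤ) + 1) = ε)
    (hβ : emultiplicity 2 (m : ℤ) = β) (hm : Even m) (hk : 1 ≤ k) (hkβε : k + 1 ≤ β + ε)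
    (hγ : 2 ≤ γ) (hkγ : k ≤ γ) (ht : 2 ^ γ ∣ t) (hq₁ : 2 ^ γ ∣ 2 * q₁)
    (hq : q₂ * t = ((r : ℤ) - 1) * q₁) (hyβ : 2 ^ β ∣ 2 * (y₁ : ℤ)) (hy₁ : Even y₁)
    (hodd : ¬ (2 : ℤ) ∣ x₁ * y₂ - x₂ * y₁) :
    ((x₂ : ℤ) * geomS ((r : ℤ) ^ y₂) m + t * y₂ - x₁ * geomS ((r : ℤ) ^ y₁) t - q₁ * t
        ≡ 0 [ZMOD 2 ^ (k + 1)] ∧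
      ((r : ℤ) ^ y₁ - 1) * x₂ + (geomS ((r : ℤ) ^ y₁) r - (r : ℤ) ^ y₂) * x₁ + q₂ * t
        ≡ 0 [ZMOD 2 ^ (k + 1)]) ↔
    (2 ∣ y₁ ∧ 2 ^ (k + 1 + 1) ∣ 2 ^ (β + ε) * x₂ ∧
      2 ^ ε * ((y₁ : ℤ) - y₂ + 1) ≡ 2 * q₁ [ZMOD 2 ^ (k + 1)]) := by
  obtain ⟨hx₁, hy₂⟩ : Odd x₁ ∧ Odd y₂ := by
    have h : ¬ (2 : ℤ) ∣ x₁ * y₂ :=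
      fun h => hodd (dvd_sub h ((even_iff_two_dvd.1 hy₁.natCast).mul_left _))
    rw [← even_iff_two_dvd, Int.not_even_iff_odd, Int.odd_mul] at h
    exact_mod_cast h
  have ht' : (2 : ℤ) ^ γ ∣ t := by exact_mod_cast ht
  have hS : 2 ^ k ∣ (r : ℤ) ^ y₁ - 1 := by
    simpa using two_pow_dvd_pow_sub_one_mul hr hε hy₁ hyβ (x := 1)
      (by simpa using pow_dvd_pow 2 hkβε)
  have hrest : 2 ^ (k + 1) ∣ (t : ℤ) * (y₂ - x₁) - q₁ * t := by
    refine dvd_sub ?_ ?_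
    · exact (pow_dvd_pow 2 (by omega)).trans (pow_succ (2 : ℤ) γ ▸
        mul_dvd_mul ht' (even_iff_two_dvd.1 (hy₂.natCast.sub_odd hx₁.natCast)))
    · rw [← mul_dvd_mul_iff_left (two_ne_zero' ℤ), ← pow_succ', ← mul_assoc]
      exact (pow_dvd_pow 2 (by omega)).trans (pow_add (2 : ℤ) γ γ ▸ mul_dvd_mul hq₁ ht')
  have hq₂ : 2 ^ (k + 1) ∣ q₂ * t - 2 * q₁ := by
    rw [hq, ← mul_dvd_mul_iff_left (two_ne_zero' ℤ), ← pow_succ',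
      show 2 * (((r : ℤ) - 1) * q₁ - 2 * q₁) = ((r : ℤ) - 3) * (2 * q₁) by ring]
    exact (pow_dvd_pow 2 (by omega)).trans
      (pow_add (2 : ℤ) 2 γ ▸ mul_dvd_mul (by norm_num; omega) hq₁)
  have h₂ (hx₂ : 2 ^ (k + 1 + 1) ∣ 2 ^ (β + ε) * x₂) :=
    second_modEq_zero_iff_of_even (q₂ := q₂) (t := t) hr hε hk hy₁ hx₁ hy₂ hS
      (two_pow_dvd_pow_sub_one_mul hr hε hy₁ hyβ (by exact_mod_cast hx₂))
      ((pow_dvd_pow 2 hkγ).trans hq₁) hq₂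
  rw [first_modEq_zero_iff_of_even hr hε hβ hm hy₂ hk hS
    (two_dvd_choose_two ((pow_dvd_pow 2 hγ).trans ht)) hrest]
  exact ⟨fun ⟨hx₂, h⟩ => ⟨even_iff_two_dvd.1 hy₁, hx₂, (h₂ hx₂).1 h⟩,
    fun ⟨_, hx₂, h⟩ => ⟨hx₂, (h₂ hx₂).2 h⟩⟩

theorem stmt_16_general (n m t r : ℕ) (hm : 0 < m) (hr : 0 < r)
    (hrm : n ∣ r ^ m - 1) (htr : n ∣ t * (r - 1))
    (α₂ β₂ γ₂ δ₂ ε : ℕ)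
    (hα1 : 2 ^ α₂ ∣ n)
    (hβ1 : 2 ^ β₂ ∣ m) (hβ2 : ¬ 2 ^ (β₂ + 1) ∣ m)
    (hγ1 : 2 ^ γ₂ ∣ t) (hγ2 : ¬ 2 ^ (γ₂ + 1) ∣ t)
    (hδ1 : 2 ^ δ₂ ∣ (r - 1)) (hδ2 : ¬ 2 ^ (δ₂ + 1) ∣ (r - 1))
    (hε1 : 2 ^ ε ∣ (r + 1)) (hε2 : ¬ 2 ^ (ε + 1) ∣ (r + 1))
    (hδ : δ₂ = 1) (hα : 1 < α₂) (hγ : 1 < γ₂)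
    (x₁ x₂ y₁ y₂ : ℕ)
    (hy : m ∣ Nat.gcd (Nat.gcd (r - 1) n) t * y₁)
    (hodd : ¬ (2 : ℤ) ∣ ((x₁ : ℤ) * (y₂ : ℤ) - (x₂ : ℤ) * (y₁ : ℤ))) :
    (((x₂ : ℤ) * geomS ((r : ℤ) ^ y₂) m + (t : ℤ) * (y₂ : ℤ)
          - (x₁ : ℤ) * geomS ((r : ℤ) ^ y₁) t
          - ((t * y₁ / m : ℕ) : ℤ) * (t : ℤ) ≡ 0 [ZMOD (2 : ℤ) ^ α₂]) ∧
     (((r : ℤ) ^ y₁ - 1) * (x₂ : ℤ)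
          + (geomS ((r : ℤ) ^ y₁) r - (r : ℤ) ^ y₂) * (x₁ : ℤ)
          + (((r - 1) * y₁ / m : ℕ) : ℤ) * (t : ℤ) ≡ 0 [ZMOD (2 : ℤ) ^ α₂])) ↔
    (2 ∣ y₁ ∧
     2 ^ (α₂ + 1) ∣ 2 ^ (β₂ + ε) * x₂ ∧
     ((2 : ℤ) ^ ε * ((y₁ : ℤ) - (y₂ : ℤ) + 1)
        ≡ 2 * ((t * y₁ / m : ℕ) : ℤ) [ZMOD (2 : ℤ) ^ α₂])) := by
  subst hδ
  obtain ⟨k, rfl⟩ : ∃ k, α₂ = k + 1 := ⟨α₂ - 1, by omega⟩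
  have hr4 : 4 ∣ (r : ℤ) + 1 := by norm_num at hδ1 hδ2; omega
  have hr1 : emultiplicity 2 ((r : ℤ) - 1) = emultiplicity 2 (2 : ℤ) := by
    simpa [Nat.cast_sub hr] using (emultiplicity_two_natCast_eq hδ1 hδ2).trans
      (emultiplicity_pow_self_of_prime Int.prime_two 1).symm
  have hε' : emultiplicity 2 ((r : ℤ) + 1) = ε := by
    exact_mod_cast emultiplicity_two_natCast_eq hε1 hε2
  have hβ' := emultiplicity_two_natCast_eq hβ1 hβ2
  have hrm' : 2 ^ (k + 1) ∣ (r : ℤ) ^ m - 1 := by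
    simpa [Nat.cast_sub (Nat.one_le_pow _ _ hr)] using Int.natCast_dvd_natCast.2 (hα1.trans hrm)
  have htr' : 2 ^ (k + 1) ∣ ((r : ℤ) - 1) * t := by
    simpa [Nat.cast_sub hr, mul_comm] using Int.natCast_dvd_natCast.2 (hα1.trans htr)
  have hm_even := even_of_four_dvd_pow_sub_one hr4 ((pow_dvd_pow 2 hα).trans hrm')
  have hkβε : k + 1 ≤ β₂ + ε := by
    have h := pow_dvd_iff_le_emultiplicity.1 hrm'
    rw [emultiplicity_pow_sub_one_of_even hr4 hm_even, hε', hβ'] at h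
    norm_cast at h
    omega
  have hkγ : k ≤ γ₂ := by
    have h := (two_pow_dvd_mul_iff_of_emultiplicity_eq hr1).1 htr'
    rw [pow_succ', mul_dvd_mul_iff_left two_ne_zero, pow_dvd_iff_le_emultiplicity,
      emultiplicity_two_natCast_eq hγ1 hγ2] at h
    exact_mod_cast h
  obtain ⟨c₁, hc₁⟩ := hy.trans (mul_dvd_mul_right (Nat.gcd_dvd_right _ _) y₁)
  obtain ⟨c₂, hc₂⟩ :=
    hy.trans (mul_dvd_mul_right ((Nat.gcd_dvd_left _ _).trans (Nat.gcd_dvd_left _ _)) y₁)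
  rw [hc₁, hc₂, Nat.mul_div_cancel_left _ hm, Nat.mul_div_cancel_left _ hm]
  have hmc₁ : (m : ℤ) * c₁ = t * y₁ := by exact_mod_cast hc₁.symm
  have hmc₂ : (m : ℤ) * c₂ = ((r : ℤ) - 1) * y₁ := by
    simpa [Nat.cast_sub hr] using congrArg (Nat.cast : ℕ → ℤ) hc₂.symm
  have hq : (c₂ : ℤ) * t = ((r : ℤ) - 1) * c₁ := mul_left_cancel₀ (show (m : ℤ) ≠ 0 by positivity)
    (by linear_combination (t : ℤ) * hmc₂ - ((r : ℤ) - 1) * hmc₁)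
  have hq₁ : 2 ^ γ₂ ∣ 2 * (c₁ : ℤ) := (two_pow_dvd_mul_iff_of_emultiplicity_eq hr1).1
    (hq ▸ dvd_mul_of_dvd_right (by exact_mod_cast hγ1) _)
  have hyβ : 2 ^ β₂ ∣ 2 * (y₁ : ℤ) := (two_pow_dvd_mul_iff_of_emultiplicity_eq hr1).1
    ((by exact_mod_cast hβ1 : (2 : ℤ) ^ β₂ ∣ m).trans ⟨c₂, hmc₂.symm⟩)
  rcases Nat.even_or_odd y₁ with hy₁ | hy₁
  · exact modEq_zero_iff_of_even hr4 hε' hβ' hm_even (by omega) hkβε hγ hkγ hγ1 hq₁ hq hyβ hy₁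
      hodd
  · exact iff_of_false
      (fun h => not_second_modEq_zero_of_odd hr4 ((pow_dvd_pow 2 hγ).trans hγ1) hα hy₁ hodd _ h.2)
      (fun h => Nat.not_even_iff_odd.2 hy₁ (even_iff_two_dvd.2 h.1))

theorem stmt_16 (n m t r : ℕ) (hn : 0 < n) (hm : 0 < m) (ht : 0 < t) (hr : 0 < r)
    (htn : t ∣ n) (hrm : n ∣ r ^ m - 1) (htr : n ∣ t * (r - 1))
    (h2n : 2 ∣ n)
    (α₂ β₂ γ₂ δ₂ ε : ℕ)
    (hα1 : 2 ^ α₂ ∣ n) (hα2 : ¬ 2 ^ (α₂ + 1) ∣ n)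
    (hβ1 : 2 ^ β₂ ∣ m) (hβ2 : ¬ 2 ^ (β₂ + 1) ∣ m)
    (hγ1 : 2 ^ γ₂ ∣ t) (hγ2 : ¬ 2 ^ (γ₂ + 1) ∣ t)
    (hδ1 : 2 ^ δ₂ ∣ (r - 1)) (hδ2 : ¬ 2 ^ (δ₂ + 1) ∣ (r - 1))
    (hε1 : 2 ^ ε ∣ (r + 1)) (hε2 : ¬ 2 ^ (ε + 1) ∣ (r + 1))
    (hδ : δ₂ = 1) (hα : 1 < α₂) (hγ : 1 < γ₂)
    (x₁ x₂ y₁ y₂ : ℕ)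
    (hy : m ∣ Nat.gcd (Nat.gcd (r - 1) n) t * y₁)
    (hodd : ¬ (2 : ℤ) ∣ ((x₁ : ℤ) * (y₂ : ℤ) - (x₂ : ℤ) * (y₁ : ℤ))) :
    (((x₂ : ℤ) * geomS ((r : ℤ) ^ y₂) m + (t : ℤ) * (y₂ : ℤ)
          - (x₁ : ℤ) * geomS ((r : ℤ) ^ y₁) t
          - ((t * y₁ / m : ℕ) : ℤ) * (t : ℤ) ≡ 0 [ZMOD (2 : ℤ) ^ α₂]) ∧
     (((r : ℤ) ^ y₁ - 1) * (x₂ : ℤ)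
          + (geomS ((r : ℤ) ^ y₁) r - (r : ℤ) ^ y₂) * (x₁ : ℤ)
          + (((r - 1) * y₁ / m : ℕ) : ℤ) * (t : ℤ) ≡ 0 [ZMOD (2 : ℤ) ^ α₂])) ↔
    (2 ∣ y₁ ∧
     2 ^ (α₂ + 1) ∣ 2 ^ (β₂ + ε) * x₂ ∧
     ((2 : ℤ) ^ ε * ((y₁ : ℤ) - (y₂ : ℤ) + 1)
        ≡ 2 * ((t * y₁ / m : ℕ) : ℤ) [ZMOD (2 : ℤ) ^ α₂])) :=
  stmt_16_general n m t r hm hr hrm htr α₂ β₂ γ₂ δ₂ ε hα1 hβ1 hβ2 hγ1 hγ2 hδ1 hδ2 hε1 hε2 hδ hα hγ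
    x₁ x₂ y₁ y₂ hy hodd
end
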